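/- arXiv:1205.1650 — 10 statements merged into one kernel-verified Lean document; each statement's English description precedes it below -/
import Mathlib

section
/- Under the RIP hypothesis with constants 0 < α ≤ β satisfying β ≤ 1/μ, set a := 2/(μα) − 2. Then for every k ≥ 0 the IHT iterates satisfy ‖x_A − x^k‖² ≤ a^k·‖x_A‖² + (4/α)·Σ_{n=0}^{k−1} a^{k−1−n}·‖e_A^n‖². -/
/-!
Write `T = Φ_{xⁿ}`, `d = x_A − xⁿ`, `w = xⁿ⁺¹ − x_A` and `e = e_Aⁿ`, so that `y − Φ(xⁿ) = Td + e`.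
Since `xⁿ⁺¹` is at least as close as `x_A` to `z = xⁿ + μT*(y − Φ(xⁿ))`,
`‖w‖² ≤ 2⟪z − x_A, w⟫ = 2μ⟪Td + e, Tw⟫ − 2⟪d, w⟫`. Expanding `‖T(d + w)‖² ≤ β‖d + w‖² ≤ ‖d + w‖²/μ`
and using the lower RIP bound on `d` turns this into `μ‖Tw − e‖² ≤ (1 − μα)‖d‖² + μ‖e‖²`; the lower
RIP bound on `w` then gives the one-step contraction `‖w‖² ≤ a‖d‖² + (4/α)‖e‖²`, which unrolls to
the accumulated bound.
-/

open Finset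

open scoped InnerProductSpace

theorem sq_norm_sub_le_two_inner_of_norm_sub_le {E : Type*} [NormedAddCommGroup E]
    [InnerProductSpace ℝ E] {z p a : E} (h : ‖z - p‖ ≤ ‖z - a‖) :
    ‖p - a‖ ^ 2 ≤ 2 * ⟪z - a, p - a⟫_ℝ := by
  have hsq : ‖(z - a) - (p - a)‖ ^ 2 ≤ ‖z - a‖ ^ 2 := by
    rw [sub_sub_sub_cancel_right]
    exact pow_le_pow_left₀ (norm_nonneg _) h 2
  rw [norm_sub_sq_real] at hsq
  linarith

theorem le_pow_mul_add_sum_of_le_mul_add {u b : ℕ → ℝ} {a : ℝ} (ha : 0 ≤ a)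
    (h : ∀ n, u (n + 1) ≤ a * u n + b n) (k : ℕ) :
    u k ≤ a ^ k * u 0 + ∑ n ∈ range k, a ^ (k - 1 - n) * b n := by
  induction k with
  | zero => simp
  | succ k ih =>
    have hshift : a * ∑ n ∈ range k, a ^ (k - 1 - n) * b n =
        ∑ n ∈ range k, a ^ (k - n) * b n := by
      rw [mul_sum]
      refine sum_congr rfl fun n hn => ?_
      rw [show k - n = k - 1 - n + 1 by have := mem_range.mp hn; omega, pow_succ]
      ring
    calc u (k + 1) ≤ a * u k + b k := h k
      _ ≤ a * (a ^ k * u 0 + ∑ n ∈ range k, a ^ (k - 1 - n) * b n) + b k := by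
        gcongr
      _ = a ^ (k + 1) * u 0 + ∑ n ∈ range (k + 1), a ^ (k + 1 - 1 - n) * b n := by
        rw [sum_range_succ, Nat.add_sub_cancel, Nat.sub_self, pow_zero, one_mul, mul_add,
          hshift, pow_succ]
        ring

section IHTStep

variable {E F : Type*} [NormedAddCommGroup E] [InnerProductSpace ℝ E]
  [NormedAddCommGroup F] [InnerProductSpace ℝ F]

theorem iht_step_mul_sq_norm_le (T : E →L[ℝ] F) {μ α β : ℝ} (hμ : 0 < μ) (hμβ : μ * β ≤ 1)
    {d w : E} {e : F} (hproj : ‖w‖ ^ 2 ≤ 2 * (μ * ⟪T d + e, T w⟫_ℝ - ⟪d, w⟫_ℝ))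
    (hupper : ‖T (d + w)‖ ^ 2 ≤ β * ‖d + w‖ ^ 2)
    (hd : α * ‖d‖ ^ 2 ≤ ‖T d‖ ^ 2) (hw : α * ‖w‖ ^ 2 ≤ ‖T w‖ ^ 2) :
    μ * α * ‖w‖ ^ 2 ≤ (2 - 2 * (μ * α)) * ‖d‖ ^ 2 + 4 * μ * ‖e‖ ^ 2 := by
  have hexpand : ‖T (d + w)‖ ^ 2 = ‖T d‖ ^ 2 + 2 * ⟪T d, T w⟫_ℝ + ‖T w‖ ^ 2 := by
    rw [map_add, norm_add_sq_real]
  have hshort : μ * ‖T (d + w)‖ ^ 2 ≤ ‖d + w‖ ^ 2 := by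
    nlinarith [mul_le_mul_of_nonneg_left hupper hμ.le, sq_nonneg ‖d + w‖]
  have hresidual : μ * ‖T w - e‖ ^ 2 ≤ (1 - μ * α) * ‖d‖ ^ 2 + μ * ‖e‖ ^ 2 := by
    rw [norm_sub_sq_real, real_inner_comm]
    rw [inner_add_left] at hproj
    nlinarith [norm_add_sq_real d w, mul_le_mul_of_nonneg_left hd hμ.le]
  have hsplit : ‖T w‖ ^ 2 ≤ 2 * ‖T w - e‖ ^ 2 + 2 * ‖e‖ ^ 2 := by
    have hpar := parallelogram_law_with_norm ℝ (T w - e) e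
    rw [sub_add_cancel] at hpar
    nlinarith [sq_nonneg ‖T w - e - e‖]
  linarith [mul_le_mul_of_nonneg_left hw hμ.le, mul_le_mul_of_nonneg_left hsplit hμ.le]

variable [CompleteSpace E] [CompleteSpace F]

theorem iht_step_sq_norm_le (T : E →L[ℝ] F) {μ α β : ℝ} (hμ : 0 < μ) (hα : 0 < α)
    (hμβ : μ * β ≤ 1) {r : F} {x x' xA : E}
    (hproj : ‖x + μ • T.adjoint r - x'‖ ≤ ‖x + μ • T.adjoint r - xA‖)
    (hupper : ‖T (x' - x)‖ ^ 2 ≤ β * ‖x' - x‖ ^ 2)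
    (hd : α * ‖xA - x‖ ^ 2 ≤ ‖T (xA - x)‖ ^ 2) (hw : α * ‖x' - xA‖ ^ 2 ≤ ‖T (x' - xA)‖ ^ 2) :
    ‖xA - x'‖ ^ 2 ≤ (2 / (μ * α) - 2) * ‖xA - x‖ ^ 2 + (4 / α) * ‖r - T (xA - x)‖ ^ 2 := by
  have hgrad : x + μ • T.adjoint r - xA =
      μ • T.adjoint (T (xA - x) + (r - T (xA - x))) - (xA - x) := by
    rw [add_sub_cancel]; abel
  have hinner := sq_norm_sub_le_two_inner_of_norm_sub_le hproj
  rw [hgrad, inner_sub_left, real_inner_smul_left, ContinuousLinearMap.adjoint_inner_left]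
    at hinner
  have hmul := iht_step_mul_sq_norm_le T hμ hμβ hinner
    (by rwa [sub_add_sub_cancel']) hd hw
  have hμα : 0 < μ * α := mul_pos hμ hα
  have hrhs : (2 / (μ * α) - 2) * ‖xA - x‖ ^ 2 + (4 / α) * ‖r - T (xA - x)‖ ^ 2 =
      ((2 - 2 * (μ * α)) * ‖xA - x‖ ^ 2 + 4 * μ * ‖r - T (xA - x)‖ ^ 2) / (μ * α) := by
    field_simp
  rw [norm_sub_rev, hrhs, le_div_iff₀ hμα]
  linarith

end IHTStep

theorem nonlinear_iht_accumulated_error_bound_general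
    {N M : ℕ}
    (Φ : EuclideanSpace ℝ (Fin N) → EuclideanSpace ℝ (Fin M))
    (Φ' : EuclideanSpace ℝ (Fin N) → (EuclideanSpace ℝ (Fin N) →L[ℝ] EuclideanSpace ℝ (Fin M)))
    (A : Set (EuclideanSpace ℝ (Fin N))) (hA0 : (0 : EuclideanSpace ℝ (Fin N)) ∈ A)
    (PA : EuclideanSpace ℝ (Fin N) → EuclideanSpace ℝ (Fin N))
    (hPA : ∀ z, PA z ∈ A ∧ ∀ a ∈ A, ‖z - PA z‖ ≤ ‖z - a‖)
    (y : EuclideanSpace ℝ (Fin M)) (μ α β : ℝ)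
    (hμ : 0 < μ) (hα : 0 < α) (hαβ : α ≤ β) (hβμ : β ≤ 1 / μ)
    (hRIP : ∀ u ∈ A, ∀ v ∈ A, ∀ w ∈ A,
      α * ‖u - v‖ ^ 2 ≤ ‖Φ' w (u - v)‖ ^ 2 ∧ ‖Φ' w (u - v)‖ ^ 2 ≤ β * ‖u - v‖ ^ 2)
    (x : ℕ → EuclideanSpace ℝ (Fin N)) (hx0 : x 0 = 0)
    (hxit : ∀ n, x (n + 1) =
      PA (x n + μ • (ContinuousLinearMap.adjoint (Φ' (x n))) (y - Φ (x n))))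
    (xA : EuclideanSpace ℝ (Fin N)) (hxA : xA ∈ A) :
    ∀ k : ℕ, ‖xA - x k‖ ^ 2 ≤
      (2 / (μ * α) - 2) ^ k * ‖xA‖ ^ 2 +
        (4 / α) * ∑ n ∈ Finset.range k,
          (2 / (μ * α) - 2) ^ (k - 1 - n) * ‖y - Φ (x n) - (Φ' (x n)) (xA - x n)‖ ^ 2 := by
  intro k
  have hμβ : μ * β ≤ 1 := by rwa [le_div_iff₀ hμ, mul_comm] at hβμ
  have ha : 0 ≤ 2 / (μ * α) - 2 := by
    rw [sub_nonneg, le_div_iff₀ (mul_pos hμ hα)]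
    linarith [mul_le_mul_of_nonneg_left hαβ hμ.le]
  have hmem : ∀ n, x n ∈ A
    | 0 => hx0 ▸ hA0
    | n + 1 => hxit n ▸ (hPA _).1
  have hstep : ∀ n, ‖xA - x (n + 1)‖ ^ 2 ≤ (2 / (μ * α) - 2) * ‖xA - x n‖ ^ 2 +
      (4 / α) * ‖y - Φ (x n) - (Φ' (x n)) (xA - x n)‖ ^ 2 := fun n =>
    iht_step_sq_norm_le (Φ' (x n)) hμ hα hμβ (hxit n ▸ (hPA _).2 xA hxA)
      (hRIP _ (hmem (n + 1)) _ (hmem n) _ (hmem n)).2 (hRIP _ hxA _ (hmem n) _ (hmem n)).1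
      (hRIP _ (hmem (n + 1)) _ hxA _ (hmem n)).1
  have hunrolled := le_pow_mul_add_sum_of_le_mul_add (u := fun n => ‖xA - x n‖ ^ 2) ha hstep k
  rw [hx0, sub_zero] at hunrolled
  rwa [mul_sum, sum_congr rfl fun n _ => mul_left_comm (4 / α) _ _]

/-- Under the RIP hypothesis with constants `0 < α ≤ β` satisfying `β ≤ 1/μ`,
setting `a := 2/(μα) − 2`, for every `k ≥ 0` the nonlinear IHT iterates satisfy
`‖x_A − x^k‖² ≤ a^k‖x_A‖² + (4/α)·Σ_{n=0}^{k−1} a^{k−1−n}‖e_A^n‖²`. -/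
theorem nonlinear_iht_accumulated_error_bound
    {N M : ℕ}
    (Φ : EuclideanSpace ℝ (Fin N) → EuclideanSpace ℝ (Fin M))
    (Φ' : EuclideanSpace ℝ (Fin N) → (EuclideanSpace ℝ (Fin N) →L[ℝ] EuclideanSpace ℝ (Fin M)))
    (hΦ : ∀ u, HasFDerivAt Φ (Φ' u) u)
    (A : Set (EuclideanSpace ℝ (Fin N))) (hA0 : (0 : EuclideanSpace ℝ (Fin N)) ∈ A)
    (PA : EuclideanSpace ℝ (Fin N) → EuclideanSpace ℝ (Fin N))
    (hPA : ∀ z, PA z ∈ A ∧ ∀ a ∈ A, ‖z - PA z‖ ≤ ‖z - a‖)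
    (y : EuclideanSpace ℝ (Fin M)) (μ α β : ℝ)
    (hμ : 0 < μ) (hα : 0 < α) (hαβ : α ≤ β) (hβμ : β ≤ 1 / μ)
    (hRIP : ∀ u ∈ A, ∀ v ∈ A, ∀ w ∈ A,
      α * ‖u - v‖ ^ 2 ≤ ‖Φ' w (u - v)‖ ^ 2 ∧ ‖Φ' w (u - v)‖ ^ 2 ≤ β * ‖u - v‖ ^ 2)
    (x : ℕ → EuclideanSpace ℝ (Fin N)) (hx0 : x 0 = 0)
    (hxit : ∀ n, x (n + 1) =
      PA (x n + μ • (ContinuousLinearMap.adjoint (Φ' (x n))) (y - Φ (x n))))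
    (xA : EuclideanSpace ℝ (Fin N)) (hxA : xA ∈ A) :
    ∀ k : ℕ, ‖xA - x k‖ ^ 2 ≤
      (2 / (μ * α) - 2) ^ k * ‖xA‖ ^ 2 +
        (4 / α) * ∑ n ∈ Finset.range k,
          (2 / (μ * α) - 2) ^ (k - 1 - n) * ‖y - Φ (x n) - (Φ' (x n)) (xA - x n)‖ ^ 2 :=
  nonlinear_iht_accumulated_error_bound_general Φ Φ' A hA0 PA hPA y μ α β hμ hα hαβ hβμ hRIP x hx0
    hxit xA hxA
end

section
/- Under the RIP hypothesis with constants 0 < α ≤ β satisfying β ≤ 1/μ, the IHT iterates satisfy, for every n ≥ 0, the per-iteration bound ‖x_A − x^{n+1}‖² ≤ 2·(1/(μα) − 1)·‖x_A − x^n‖² + (4/α)·‖e_A^n‖². -/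
/-! `A` need not be convex, so the projection is used only through its best-approximation property:
since `x^{n+1}` is at least as close to the gradient point `z = x^n + μ Φ_{x^n}*(y - Φ(x^n))` as
`x_A` is, `‖x_A - x^{n+1}‖² ≤ 2⟪x_A - z, x_A - x^{n+1}⟫`. Expanding the right-hand side with
`y - Φ(x^n) = Φ_{x^n} a + e`, `a = x_A - x^n`, `e = e_A^n`, and polarizing both `⟪a, d⟫` and
`⟪Φ_{x^n} a, Φ_{x^n} d⟫`, `d = x_A - x^{n+1}`, the upper RIP bound with `μβ ≤ 1` removes the term
in `x^{n+1} - x^n` and leaves `μ‖Φ_{x^n} d‖² ≤ (1 - μα)‖a‖² + 2μ‖e‖‖Φ_{x^n} d‖`. Absorbing the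
cross term and applying the lower RIP bound to `d` gives the estimate. -/

open scoped InnerProductSpace

theorem le_of_mul_sq_le_add_two_mul {μ α δ s t e : ℝ} (hμ : 0 < μ) (hα : 0 < α)
    (hδ : α * δ ≤ t ^ 2) (ht : μ * t ^ 2 ≤ (1 - μ * α) * s + 2 * μ * (e * t)) :
    δ ≤ 2 * (1 / (μ * α) - 1) * s + 4 / α * e ^ 2 := by
  have hμα : 0 < μ * α := mul_pos hμ hα
  rw [← mul_le_mul_iff_right₀ hμα]
  have hrhs : μ * α * (2 * (1 / (μ * α) - 1) * s + 4 / α * e ^ 2)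
      = 2 * (1 - μ * α) * s + 4 * μ * e ^ 2 := by
    field_simp
  rw [hrhs]
  nlinarith [mul_nonneg hμ.le (sq_nonneg (t - 2 * e))]

section

variable {E F : Type*} [NormedAddCommGroup E] [InnerProductSpace ℝ E]
  [NormedAddCommGroup F] [InnerProductSpace ℝ F]

theorem norm_sub_sq_le_two_inner_of_norm_sub_le {z p q : E} (h : ‖z - p‖ ≤ ‖z - q‖) :
    ‖q - p‖ ^ 2 ≤ 2 * ⟪q - z, q - p⟫_ℝ := by
  have hsq : ‖(z - q) + (q - p)‖ ^ 2 ≤ ‖z - q‖ ^ 2 := by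
    rw [sub_add_sub_cancel]; gcongr
  rw [norm_add_sq_real, ← neg_sub q z, inner_neg_left] at hsq
  linarith

variable [CompleteSpace E] [CompleteSpace F]

theorem mul_norm_sq_apply_le_of_projected_gradient_step (T : E →L[ℝ] F) {μ : ℝ} {a d : E} {e : F}
    (hstep : ‖d‖ ^ 2 ≤ 2 * ⟪a - μ • ContinuousLinearMap.adjoint T (T a + e), d⟫_ℝ)
    (hcontr : μ * ‖T (a - d)‖ ^ 2 ≤ ‖a - d‖ ^ 2) :
    μ * ‖T d‖ ^ 2 ≤ ‖a‖ ^ 2 - μ * ‖T a‖ ^ 2 - 2 * μ * ⟪e, T d⟫_ℝ := by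
  rw [inner_sub_left, real_inner_smul_left, ContinuousLinearMap.adjoint_inner_left,
    inner_add_left] at hstep
  have hpol : ‖a - d‖ ^ 2 = ‖a‖ ^ 2 - 2 * ⟪a, d⟫_ℝ + ‖d‖ ^ 2 := norm_sub_sq_real a d
  have hpolT : ‖T (a - d)‖ ^ 2 = ‖T a‖ ^ 2 - 2 * ⟪T a, T d⟫_ℝ + ‖T d‖ ^ 2 := by
    rw [map_sub]; exact norm_sub_sq_real _ _
  rw [hpol, hpolT] at hcontr
  linarith

theorem norm_sub_sq_le_of_projected_gradient_step (T : E →L[ℝ] F) {μ α β : ℝ} (hμ : 0 < μ)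
    (hα : 0 < α) (hβμ : β ≤ 1 / μ) {x x' xA : E} {r : F}
    (hproj : ‖x + μ • ContinuousLinearMap.adjoint T r - x'‖ ≤
      ‖x + μ • ContinuousLinearMap.adjoint T r - xA‖)
    (hα_old : α * ‖xA - x‖ ^ 2 ≤ ‖T (xA - x)‖ ^ 2)
    (hα_new : α * ‖xA - x'‖ ^ 2 ≤ ‖T (xA - x')‖ ^ 2)
    (hβ_step : ‖T (x' - x)‖ ^ 2 ≤ β * ‖x' - x‖ ^ 2) :
    ‖xA - x'‖ ^ 2 ≤ 2 * (1 / (μ * α) - 1) * ‖xA - x‖ ^ 2 + 4 / α * ‖r - T (xA - x)‖ ^ 2 := by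
  set a := xA - x
  set d := xA - x'
  set e := r - T a
  have hstep : ‖d‖ ^ 2 ≤ 2 * ⟪a - μ • ContinuousLinearMap.adjoint T (T a + e), d⟫_ℝ := by
    rw [add_sub_cancel]
    have h := norm_sub_sq_le_two_inner_of_norm_sub_le hproj
    rwa [sub_add_eq_sub_sub] at h
  have hcontr : μ * ‖T (a - d)‖ ^ 2 ≤ ‖a - d‖ ^ 2 := by
    have had : a - d = x' - x := sub_sub_sub_cancel_left x x' xA
    have hμβ : μ * β ≤ 1 := by rw [le_div_iff₀ hμ] at hβμ; linarith
    rw [had]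
    nlinarith [mul_le_mul_of_nonneg_left hβ_step hμ.le, sq_nonneg ‖x' - x‖]
  have hdescent := mul_norm_sq_apply_le_of_projected_gradient_step T hstep hcontr
  have hcross : -(‖e‖ * ‖T d‖) ≤ ⟪e, T d⟫_ℝ := (abs_le.mp (abs_real_inner_le_norm e (T d))).1
  refine le_of_mul_sq_le_add_two_mul hμ hα hα_new ?_
  nlinarith [mul_le_mul_of_nonneg_left hα_old hμ.le, mul_le_mul_of_nonneg_left hcross hμ.le]

end

theorem nonlinear_iht_per_iteration_bound_general
    {N M : ℕ}
    (Φ : EuclideanSpace ℝ (Fin N) → EuclideanSpace ℝ (Fin M))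
    (Φ' : EuclideanSpace ℝ (Fin N) → (EuclideanSpace ℝ (Fin N) →L[ℝ] EuclideanSpace ℝ (Fin M)))
    (A : Set (EuclideanSpace ℝ (Fin N))) (hA0 : (0 : EuclideanSpace ℝ (Fin N)) ∈ A)
    (PA : EuclideanSpace ℝ (Fin N) → EuclideanSpace ℝ (Fin N))
    (hPA : ∀ z, PA z ∈ A ∧ ∀ a ∈ A, ‖z - PA z‖ ≤ ‖z - a‖)
    (y : EuclideanSpace ℝ (Fin M)) (μ α β : ℝ)
    (hμ : 0 < μ) (hα : 0 < α) (hβμ : β ≤ 1 / μ)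
    (hRIP : ∀ u ∈ A, ∀ v ∈ A, ∀ w ∈ A,
      α * ‖u - v‖ ^ 2 ≤ ‖Φ' w (u - v)‖ ^ 2 ∧ ‖Φ' w (u - v)‖ ^ 2 ≤ β * ‖u - v‖ ^ 2)
    (xseq : ℕ → EuclideanSpace ℝ (Fin N)) (hx0 : xseq 0 = 0)
    (hxit : ∀ n, xseq (n + 1) =
      PA (xseq n + μ • (ContinuousLinearMap.adjoint (Φ' (xseq n))) (y - Φ (xseq n))))
    (xA : EuclideanSpace ℝ (Fin N)) (hxA : xA ∈ A)
 :
    ∀ n : ℕ, ‖xA - xseq (n + 1)‖ ^ 2 ≤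
      2 * (1 / (μ * α) - 1) * ‖xA - xseq n‖ ^ 2 +
        (4 / α) * ‖y - Φ (xseq n) - (Φ' (xseq n)) (xA - xseq n)‖ ^ 2 := by
  have hmem : ∀ n, xseq n ∈ A
    | 0 => hx0 ▸ hA0
    | n + 1 => hxit n ▸ (hPA _).1
  intro n
  have hproj := (hPA (xseq n + μ • (ContinuousLinearMap.adjoint (Φ' (xseq n))) (y - Φ (xseq n)))).2
    xA hxA
  rw [← hxit] at hproj
  exact norm_sub_sq_le_of_projected_gradient_step (Φ' (xseq n)) hμ hα hβμ hproj
    (hRIP _ hxA _ (hmem n) _ (hmem n)).1 (hRIP _ hxA _ (hmem (n + 1)) _ (hmem n)).1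
    (hRIP _ (hmem (n + 1)) _ (hmem n) _ (hmem n)).2

/-- Under the RIP hypothesis with constants `0 < α ≤ β` satisfying `β ≤ 1/μ`,
the nonlinear IHT iterates satisfy, for every `n ≥ 0`, the per-iteration bound
`‖x_A − x^{n+1}‖² ≤ 2(1/(μα) − 1)‖x_A − x^n‖² + (4/α)‖e_A^n‖²`. -/
theorem nonlinear_iht_per_iteration_bound
    {N M : ℕ}
    (Φ : EuclideanSpace ℝ (Fin N) → EuclideanSpace ℝ (Fin M))
    (Φ' : EuclideanSpace ℝ (Fin N) → (EuclideanSpace ℝ (Fin N) →L[ℝ] EuclideanSpace ℝ (Fin M)))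
    (hΦ : ∀ u, HasFDerivAt Φ (Φ' u) u)
    (A : Set (EuclideanSpace ℝ (Fin N))) (hA0 : (0 : EuclideanSpace ℝ (Fin N)) ∈ A)
    (PA : EuclideanSpace ℝ (Fin N) → EuclideanSpace ℝ (Fin N))
    (hPA : ∀ z, PA z ∈ A ∧ ∀ a ∈ A, ‖z - PA z‖ ≤ ‖z - a‖)
    (y : EuclideanSpace ℝ (Fin M)) (μ α β : ℝ)
    (hμ : 0 < μ) (hα : 0 < α) (hαβ : α ≤ β) (hβμ : β ≤ 1 / μ)
    (hRIP : ∀ u ∈ A, ∀ v ∈ A, ∀ w ∈ A,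
      α * ‖u - v‖ ^ 2 ≤ ‖Φ' w (u - v)‖ ^ 2 ∧ ‖Φ' w (u - v)‖ ^ 2 ≤ β * ‖u - v‖ ^ 2)
    (xseq : ℕ → EuclideanSpace ℝ (Fin N)) (hx0 : xseq 0 = 0)
    (hxit : ∀ n, xseq (n + 1) =
      PA (xseq n + μ • (ContinuousLinearMap.adjoint (Φ' (xseq n))) (y - Φ (xseq n))))
    (xA : EuclideanSpace ℝ (Fin N)) (hxA : xA ∈ A)
 :
    ∀ n : ℕ, ‖xA - xseq (n + 1)‖ ^ 2 ≤
      2 * (1 / (μ * α) - 1) * ‖xA - xseq n‖ ^ 2 +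
        (4 / α) * ‖y - Φ (xseq n) - (Φ' (xseq n)) (xA - xseq n)‖ ^ 2 :=
  nonlinear_iht_per_iteration_bound_general Φ Φ' A hA0 PA hPA y μ α β hμ hα hβμ hRIP xseq hx0 hxit
    xA hxA
end

section
/- Under the RIP hypothesis with constants 0 < α ≤ β satisfying β ≤ 1/μ, the IHT iterates satisfy, for every n ≥ 0, ‖y − Φ(x^n) − Φ_{x^n}(x^{n+1} − x^n)‖² ≤ (1/μ − α)·‖x_A − x^n‖² + ‖e_A^n‖². -/
/-!
One IHT step is a projected gradient step on `w ↦ ‖r - L w‖²` with `L = Φ_{xⁿ}` and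
`r = y - Φ(xⁿ)`.  Completing the square, `‖μ • L† r - w‖² / μ` equals the surrogate
`‖r‖² - 2⟪r, L w⟫ + ‖w‖² / μ` up to a constant, so optimality of the projection says that the
step `u = xⁿ⁺¹ - xⁿ` does at least as well as `v = x_A - xⁿ` for the surrogate.  The upper RIP
bound with `β ≤ 1/μ` makes the surrogate majorize `‖r - L u‖²`, and the lower RIP bound costs at
most `(1/μ - α)‖v‖²` when passing back from the surrogate to `‖r - L v‖²`.
-/

open scoped InnerProduct RealInnerProductSpace

section LinearizedResidual

variable {E F : Type*} [NormedAddCommGroup E] [InnerProductSpace ℝ E] [CompleteSpace E]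
  [NormedAddCommGroup F] [InnerProductSpace ℝ F] [CompleteSpace F]

theorem norm_smul_adjoint_sub_sq (L : E →L[ℝ] F) (r : F) (μ : ℝ) (w : E) :
    ‖μ • (L†) r - w‖ ^ 2 = μ ^ 2 * ‖(L†) r‖ ^ 2 - 2 * μ * ⟪r, L w⟫ + ‖w‖ ^ 2 := by
  rw [norm_sub_sq_real, norm_smul, real_inner_smul_left, L.adjoint_inner_left,
    Real.norm_eq_abs, mul_pow, sq_abs]
  ring

theorem norm_sub_apply_sq_le_of_norm_smul_adjoint_sub_le {L : E →L[ℝ] F} {r : F} {μ α : ℝ}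
    {u v : E} (hμ : 0 < μ) (hproj : ‖μ • (L†) r - u‖ ≤ ‖μ • (L†) r - v‖)
    (hu : ‖L u‖ ^ 2 ≤ 1 / μ * ‖u‖ ^ 2) (hv : α * ‖v‖ ^ 2 ≤ ‖L v‖ ^ 2) :
    ‖r - L u‖ ^ 2 ≤ (1 / μ - α) * ‖v‖ ^ 2 + ‖r - L v‖ ^ 2 := by
  have hsurrogate : 2 * ⟪r, L v⟫ - 2 * ⟪r, L u⟫ ≤ 1 / μ * (‖v‖ ^ 2 - ‖u‖ ^ 2) := by
    have hsq := pow_le_pow_left₀ (norm_nonneg _) hproj 2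
    rw [norm_smul_adjoint_sub_sq, norm_smul_adjoint_sub_sq] at hsq
    rw [one_div, ← div_eq_inv_mul, le_div_iff₀' hμ]
    linarith
  rw [norm_sub_sq_real, norm_sub_sq_real]
  linarith

end LinearizedResidual

theorem nonlinear_iht_residual_bound_general
    {N M : ℕ}
    (Φ : EuclideanSpace ℝ (Fin N) → EuclideanSpace ℝ (Fin M))
    (Φ' : EuclideanSpace ℝ (Fin N) → (EuclideanSpace ℝ (Fin N) →L[ℝ] EuclideanSpace ℝ (Fin M)))
    (A : Set (EuclideanSpace ℝ (Fin N))) (hA0 : (0 : EuclideanSpace ℝ (Fin N)) ∈ A)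
    (PA : EuclideanSpace ℝ (Fin N) → EuclideanSpace ℝ (Fin N))
    (hPA : ∀ z, PA z ∈ A ∧ ∀ a ∈ A, ‖z - PA z‖ ≤ ‖z - a‖)
    (y : EuclideanSpace ℝ (Fin M)) (μ α β : ℝ)
    (hμ : 0 < μ) (hβμ : β ≤ 1 / μ)
    (hRIP : ∀ u ∈ A, ∀ v ∈ A, ∀ w ∈ A,
      α * ‖u - v‖ ^ 2 ≤ ‖Φ' w (u - v)‖ ^ 2 ∧ ‖Φ' w (u - v)‖ ^ 2 ≤ β * ‖u - v‖ ^ 2)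
    (xseq : ℕ → EuclideanSpace ℝ (Fin N)) (hx0 : xseq 0 = 0)
    (hxit : ∀ n, xseq (n + 1) =
      PA (xseq n + μ • (ContinuousLinearMap.adjoint (Φ' (xseq n))) (y - Φ (xseq n))))
    (xA : EuclideanSpace ℝ (Fin N)) (hxA : xA ∈ A)
 :
    ∀ n : ℕ, ‖y - Φ (xseq n) - (Φ' (xseq n)) (xseq (n + 1) - xseq n)‖ ^ 2 ≤
      (1 / μ - α) * ‖xA - xseq n‖ ^ 2 +
        ‖y - Φ (xseq n) - (Φ' (xseq n)) (xA - xseq n)‖ ^ 2 := by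
  have hmem : ∀ n, xseq n ∈ A := by
    rintro (_ | n)
    · exact hx0 ▸ hA0
    · exact hxit n ▸ (hPA _).1
  intro n
  set x := xseq n
  set p := μ • ((Φ' x)†) (y - Φ x)
  have hproj : ‖p - (xseq (n + 1) - x)‖ ≤ ‖p - (xA - x)‖ := by
    have h := (hPA (x + p)).2 xA hxA
    rw [← hxit n] at h
    rwa [sub_sub_eq_add_sub, add_comm p, sub_sub_eq_add_sub, add_comm p]
  apply norm_sub_apply_sq_le_of_norm_smul_adjoint_sub_le hμ hproj
  · exact (hRIP _ (hmem (n + 1)) _ (hmem n) _ (hmem n)).2.trans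
      (mul_le_mul_of_nonneg_right hβμ (sq_nonneg _))
  · exact (hRIP _ hxA _ (hmem n) _ (hmem n)).1

/-- Under the RIP hypothesis with constants `0 < α ≤ β` satisfying `β ≤ 1/μ`,
the nonlinear IHT iterates satisfy, for every `n ≥ 0`,
`‖y − Φ(x^n) − Φ_{x^n}(x^{n+1} − x^n)‖² ≤ (1/μ − α)‖x_A − x^n‖² + ‖e_A^n‖²`. -/
theorem nonlinear_iht_residual_bound
    {N M : ℕ}
    (Φ : EuclideanSpace ℝ (Fin N) → EuclideanSpace ℝ (Fin M))
    (Φ' : EuclideanSpace ℝ (Fin N) → (EuclideanSpace ℝ (Fin N) →L[ℝ] EuclideanSpace ℝ (Fin M)))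
    (hΦ : ∀ u, HasFDerivAt Φ (Φ' u) u)
    (A : Set (EuclideanSpace ℝ (Fin N))) (hA0 : (0 : EuclideanSpace ℝ (Fin N)) ∈ A)
    (PA : EuclideanSpace ℝ (Fin N) → EuclideanSpace ℝ (Fin N))
    (hPA : ∀ z, PA z ∈ A ∧ ∀ a ∈ A, ‖z - PA z‖ ≤ ‖z - a‖)
    (y : EuclideanSpace ℝ (Fin M)) (μ α β : ℝ)
    (hμ : 0 < μ) (hα : 0 < α) (hαβ : α ≤ β) (hβμ : β ≤ 1 / μ)
    (hRIP : ∀ u ∈ A, ∀ v ∈ A, ∀ w ∈ A,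
      α * ‖u - v‖ ^ 2 ≤ ‖Φ' w (u - v)‖ ^ 2 ∧ ‖Φ' w (u - v)‖ ^ 2 ≤ β * ‖u - v‖ ^ 2)
    (xseq : ℕ → EuclideanSpace ℝ (Fin N)) (hx0 : xseq 0 = 0)
    (hxit : ∀ n, xseq (n + 1) =
      PA (xseq n + μ • (ContinuousLinearMap.adjoint (Φ' (xseq n))) (y - Φ (xseq n))))
    (xA : EuclideanSpace ℝ (Fin N)) (hxA : xA ∈ A)
 :
    ∀ n : ℕ, ‖y - Φ (xseq n) - (Φ' (xseq n)) (xseq (n + 1) - xseq n)‖ ^ 2 ≤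
      (1 / μ - α) * ‖xA - xseq n‖ ^ 2 +
        ‖y - Φ (xseq n) - (Φ' (xseq n)) (xA - xseq n)‖ ^ 2 :=
  nonlinear_iht_residual_bound_general Φ Φ' A hA0 PA hPA y μ α β hμ hβμ hRIP xseq hx0 hxit xA hxA
end

section
/- Assume the RIP hypothesis with constants 0 < α ≤ β satisfying β ≤ 1/μ, and assume in addition the linearization-error bound ‖Φ(u) − Φ(v) − Φ_{u}(u − v)‖² ≤ C·‖u − v‖² for all u, v ∈ A, where C ≥ 0. Set e_A := y − Φ(x_A). Then the IHT iterates satisfy, for every n ≥ 0, ‖x_A − x^{n+1}‖² ≤ 2·(1/(μα) − 1 + 4C/α)·‖x_A − x^n‖² + (8/α)·‖e_A‖². -/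
/-!
One IHT step is a step of linear IHT for the operator `T = Φ_x` and data `b = y − Φ(x) + T x`,
so that `b − T x_A = e_A^n`. The surrogate `z ↦ μ‖b − T z‖² − μ‖T(z − x)‖² + ‖z − x‖²` differs
from `‖x + μ T*(b − T x) − z‖²` by a constant, so the projection makes it no larger at `x⁺`
than at `x_A`. By the upper RIP bound and `μβ ≤ 1` it majorizes `μ‖b − T z‖²`, and by the
lower one it is at most `(1 − μα)‖x_A − x‖² + μ‖e_A^n‖²` at `x_A`; the lower RIP bound then
converts the bound on `‖T(x_A − x⁺)‖²` into one on `‖x_A − x⁺‖²`. Finally `e_A^n` is split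
into `e_A` and the linearization error.
-/

open RealInnerProductSpace

theorem norm_sub_sq_le_two_mul {G : Type*} [SeminormedAddCommGroup G] (u v : G) :
    ‖u - v‖ ^ 2 ≤ 2 * (‖u‖ ^ 2 + ‖v‖ ^ 2) :=
  (pow_le_pow_left₀ (norm_nonneg _) (norm_sub_le u v) 2).trans add_sq_le

section LinearIHTStep

variable {E F : Type*} [NormedAddCommGroup E] [InnerProductSpace ℝ E]
  [NormedAddCommGroup F] [InnerProductSpace ℝ F]

def ihtSurrogate (T : E →L[ℝ] F) (b : F) (μ : ℝ) (x z : E) : ℝ :=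
  μ * ‖b - T z‖ ^ 2 - μ * ‖T (z - x)‖ ^ 2 + ‖z - x‖ ^ 2

theorem ihtSurrogate_eq [CompleteSpace E] [CompleteSpace F] (T : E →L[ℝ] F) (b : F) (μ : ℝ)
    (x z : E) :
    ihtSurrogate T b μ x z =
      ‖x + μ • T.adjoint (b - T x) - z‖ ^ 2 + μ * ‖b - T x‖ ^ 2
        - μ ^ 2 * ‖T.adjoint (b - T x)‖ ^ 2 := by
  generalize hr : b - T x = r
  have hb : b - T z = r - T (z - x) := by rw [← hr, map_sub]; abel
  have hu : x + μ • T.adjoint r - z = μ • T.adjoint r - (z - x) := by abel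
  rw [ihtSurrogate, hb, hu, norm_sub_sq_real r, norm_sub_sq_real (μ • _), norm_smul,
    real_inner_smul_left, ContinuousLinearMap.adjoint_inner_left, Real.norm_eq_abs, mul_pow, sq_abs]
  ring

theorem ihtSurrogate_le_of_norm_sub_le [CompleteSpace E] [CompleteSpace F] (T : E →L[ℝ] F)
    (b : F) (μ : ℝ) {x a p : E}
    (hp : ‖x + μ • T.adjoint (b - T x) - p‖ ≤ ‖x + μ • T.adjoint (b - T x) - a‖) :
    ihtSurrogate T b μ x p ≤ ihtSurrogate T b μ x a := by
  rw [ihtSurrogate_eq, ihtSurrogate_eq]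
  gcongr

theorem norm_sub_apply_sq_le_of_ihtSurrogate_le (T : E →L[ℝ] F) (b : F) {μ α : ℝ} {x a p : E}
    (hμ : 0 < μ) (hS : ihtSurrogate T b μ x p ≤ ihtSurrogate T b μ x a)
    (hupper : μ * ‖T (p - x)‖ ^ 2 ≤ ‖p - x‖ ^ 2)
    (hlower : α * ‖a - x‖ ^ 2 ≤ ‖T (a - x)‖ ^ 2) :
    ‖b - T p‖ ^ 2 ≤ (1 / μ - α) * ‖a - x‖ ^ 2 + ‖b - T a‖ ^ 2 := by
  unfold ihtSurrogate at hS
  have key : μ * ‖b - T p‖ ^ 2 ≤ μ * ((1 / μ - α) * ‖a - x‖ ^ 2 + ‖b - T a‖ ^ 2) := by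
    have hμα : μ * ((1 / μ - α) * ‖a - x‖ ^ 2) = ‖a - x‖ ^ 2 - μ * (α * ‖a - x‖ ^ 2) := by
      field_simp
    linarith [mul_le_mul_of_nonneg_left hlower hμ.le]
  exact le_of_mul_le_mul_left key hμ

theorem mul_norm_sub_sq_le_of_ihtSurrogate_le (T : E →L[ℝ] F) (b : F) {μ α : ℝ} {x a p : E}
    (hμ : 0 < μ) (hS : ihtSurrogate T b μ x p ≤ ihtSurrogate T b μ x a)
    (hupper : μ * ‖T (p - x)‖ ^ 2 ≤ ‖p - x‖ ^ 2)
    (hlower_x : α * ‖a - x‖ ^ 2 ≤ ‖T (a - x)‖ ^ 2)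
    (hlower_p : α * ‖a - p‖ ^ 2 ≤ ‖T (a - p)‖ ^ 2) :
    α * ‖a - p‖ ^ 2 ≤ 2 * (1 / μ - α) * ‖a - x‖ ^ 2 + 4 * ‖b - T a‖ ^ 2 := by
  have hres := norm_sub_apply_sq_le_of_ihtSurrogate_le T b hμ hS hupper hlower_x
  have hsplit : T (a - p) = (b - T p) - (b - T a) := by rw [map_sub]; abel
  calc α * ‖a - p‖ ^ 2 ≤ ‖T (a - p)‖ ^ 2 := hlower_p
    _ ≤ 2 * (‖b - T p‖ ^ 2 + ‖b - T a‖ ^ 2) := hsplit ▸ norm_sub_sq_le_two_mul _ _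
    _ ≤ 2 * (1 / μ - α) * ‖a - x‖ ^ 2 + 4 * ‖b - T a‖ ^ 2 := by linarith

end LinearIHTStep

theorem norm_linearization_residual_sq_le {R E F : Type*} [Semiring R]
    [SeminormedAddCommGroup E] [SeminormedAddCommGroup F] [Module R E] [Module R F]
    (Φ : E → F) (T : E →L[R] F) (y : F) {C : ℝ} {x a : E}
    (hlin : ‖Φ x - Φ a - T (x - a)‖ ^ 2 ≤ C * ‖x - a‖ ^ 2) :
    ‖y - Φ x - T (a - x)‖ ^ 2 ≤ 2 * ‖y - Φ a‖ ^ 2 + 2 * C * ‖a - x‖ ^ 2 := by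
  have hsplit : y - Φ x - T (a - x) = (y - Φ a) - (Φ x - Φ a - T (x - a)) := by
    simp only [map_sub]; abel
  rw [hsplit, norm_sub_rev a x]
  linarith [norm_sub_sq_le_two_mul (y - Φ a) (Φ x - Φ a - T (x - a))]

theorem nonlinear_iht_per_iteration_bound_of_linearization_error_general
    {N M : ℕ}
    (Φ : EuclideanSpace ℝ (Fin N) → EuclideanSpace ℝ (Fin M))
    (Φ' : EuclideanSpace ℝ (Fin N) → (EuclideanSpace ℝ (Fin N) →L[ℝ] EuclideanSpace ℝ (Fin M)))
    (A : Set (EuclideanSpace ℝ (Fin N))) (hA0 : (0 : EuclideanSpace ℝ (Fin N)) ∈ A)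
    (PA : EuclideanSpace ℝ (Fin N) → EuclideanSpace ℝ (Fin N))
    (hPA : ∀ z, PA z ∈ A ∧ ∀ a ∈ A, ‖z - PA z‖ ≤ ‖z - a‖)
    (y : EuclideanSpace ℝ (Fin M)) (μ α β : ℝ)
    (hμ : 0 < μ) (hα : 0 < α) (hβμ : β ≤ 1 / μ)
    (hRIP : ∀ u ∈ A, ∀ v ∈ A, ∀ w ∈ A,
      α * ‖u - v‖ ^ 2 ≤ ‖Φ' w (u - v)‖ ^ 2 ∧ ‖Φ' w (u - v)‖ ^ 2 ≤ β * ‖u - v‖ ^ 2)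
    (xseq : ℕ → EuclideanSpace ℝ (Fin N)) (hx0 : xseq 0 = 0)
    (hxit : ∀ n, xseq (n + 1) =
      PA (xseq n + μ • (ContinuousLinearMap.adjoint (Φ' (xseq n))) (y - Φ (xseq n))))
    (xA : EuclideanSpace ℝ (Fin N)) (hxA : xA ∈ A)
    (C : ℝ)
    (hlin : ∀ u ∈ A, ∀ v ∈ A, ‖Φ u - Φ v - (Φ' u) (u - v)‖ ^ 2 ≤ C * ‖u - v‖ ^ 2) :
    ∀ n : ℕ, ‖xA - xseq (n + 1)‖ ^ 2 ≤
      2 * (1 / (μ * α) - 1 + 4 * C / α) * ‖xA - xseq n‖ ^ 2 +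
        (8 / α) * ‖y - Φ xA‖ ^ 2 := by
  have hmem : ∀ k, xseq k ∈ A
    | 0 => hx0 ▸ hA0
    | k + 1 => hxit k ▸ (hPA _).1
  intro n
  set x := xseq n
  set T := Φ' x
  set b := y - Φ x + T x
  have hb : ∀ z, b - T z = y - Φ x - T (z - x) := fun z => by simp only [b, map_sub]; abel
  have hS : ihtSurrogate T b μ x (xseq (n + 1)) ≤ ihtSurrogate T b μ x xA := by
    apply ihtSurrogate_le_of_norm_sub_le
    rw [add_sub_cancel_right, hxit n]
    exact (hPA _).2 xA hxA
  have hupper : μ * ‖T (xseq (n + 1) - x)‖ ^ 2 ≤ ‖xseq (n + 1) - x‖ ^ 2 := by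
    have hμβ : μ * β ≤ 1 := by rwa [le_div_iff₀ hμ, mul_comm] at hβμ
    calc μ * ‖T (xseq (n + 1) - x)‖ ^ 2 ≤ μ * (β * ‖xseq (n + 1) - x‖ ^ 2) :=
          mul_le_mul_of_nonneg_left (hRIP _ (hmem (n + 1)) x (hmem n) x (hmem n)).2 hμ.le
      _ = μ * β * ‖xseq (n + 1) - x‖ ^ 2 := by ring
      _ ≤ ‖xseq (n + 1) - x‖ ^ 2 := mul_le_of_le_one_left (sq_nonneg _) hμβ
  have hstep := mul_norm_sub_sq_le_of_ihtSurrogate_le T b hμ hS hupper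
    (hRIP xA hxA x (hmem n) x (hmem n)).1 (hRIP xA hxA _ (hmem (n + 1)) x (hmem n)).1
  have hres := norm_linearization_residual_sq_le Φ T y (hlin x (hmem n) xA hxA)
  rw [hb] at hstep
  have hrhs : α * (2 * (1 / (μ * α) - 1 + 4 * C / α) * ‖xA - x‖ ^ 2 + 8 / α * ‖y - Φ xA‖ ^ 2)
      = 2 * (1 / μ - α) * ‖xA - x‖ ^ 2 + 4 * (2 * ‖y - Φ xA‖ ^ 2 + 2 * C * ‖xA - x‖ ^ 2) := by
    field_simp; ring
  refine le_of_mul_le_mul_left ?_ hα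
  rw [hrhs]
  linarith

/-- Under the RIP hypothesis with `0 < α ≤ β ≤ 1/μ` and the linearization-error
bound `‖Φ(u) − Φ(v) − Φ_u(u − v)‖² ≤ C‖u − v‖²` on `A` with `C ≥ 0`, with `e_A := y − Φ(x_A)`,
the nonlinear IHT iterates satisfy, for every `n ≥ 0`,
`‖x_A − x^{n+1}‖² ≤ 2(1/(μα) − 1 + 4C/α)‖x_A − x^n‖² + (8/α)‖e_A‖²`. -/
theorem nonlinear_iht_per_iteration_bound_of_linearization_error
    {N M : ℕ}
    (Φ : EuclideanSpace ℝ (Fin N) → EuclideanSpace ℝ (Fin M))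
    (Φ' : EuclideanSpace ℝ (Fin N) → (EuclideanSpace ℝ (Fin N) →L[ℝ] EuclideanSpace ℝ (Fin M)))
    (hΦ : ∀ u, HasFDerivAt Φ (Φ' u) u)
    (A : Set (EuclideanSpace ℝ (Fin N))) (hA0 : (0 : EuclideanSpace ℝ (Fin N)) ∈ A)
    (PA : EuclideanSpace ℝ (Fin N) → EuclideanSpace ℝ (Fin N))
    (hPA : ∀ z, PA z ∈ A ∧ ∀ a ∈ A, ‖z - PA z‖ ≤ ‖z - a‖)
    (y : EuclideanSpace ℝ (Fin M)) (μ α β : ℝ)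
    (hμ : 0 < μ) (hα : 0 < α) (hαβ : α ≤ β) (hβμ : β ≤ 1 / μ)
    (hRIP : ∀ u ∈ A, ∀ v ∈ A, ∀ w ∈ A,
      α * ‖u - v‖ ^ 2 ≤ ‖Φ' w (u - v)‖ ^ 2 ∧ ‖Φ' w (u - v)‖ ^ 2 ≤ β * ‖u - v‖ ^ 2)
    (xseq : ℕ → EuclideanSpace ℝ (Fin N)) (hx0 : xseq 0 = 0)
    (hxit : ∀ n, xseq (n + 1) =
      PA (xseq n + μ • (ContinuousLinearMap.adjoint (Φ' (xseq n))) (y - Φ (xseq n))))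
    (xA : EuclideanSpace ℝ (Fin N)) (hxA : xA ∈ A)
    (C : ℝ) (hC : 0 ≤ C)
    (hlin : ∀ u ∈ A, ∀ v ∈ A, ‖Φ u - Φ v - (Φ' u) (u - v)‖ ^ 2 ≤ C * ‖u - v‖ ^ 2) :
    ∀ n : ℕ, ‖xA - xseq (n + 1)‖ ^ 2 ≤
      2 * (1 / (μ * α) - 1 + 4 * C / α) * ‖xA - xseq n‖ ^ 2 +
        (8 / α) * ‖y - Φ xA‖ ^ 2 :=
  nonlinear_iht_per_iteration_bound_of_linearization_error_general Φ Φ' A hA0 PA hPA y μ α β hμ hα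
    hβμ hRIP xseq hx0 hxit xA hxA C hlin
end

section
/- Assume the RIP hypothesis with constants 0 < α ≤ β satisfying β ≤ 1/μ, assume the linearization-error bound ‖Φ(u) − Φ(v) − Φ_{u}(u − v)‖² ≤ C·‖u − v‖² for all u, v ∈ A with C ≥ 0, and assume 1/μ < (3/2)α − 4C. Set e_A := y − Φ(x_A). Then for every x ∈ H the IHT iterates satisfy limsup_{n→∞} ‖x − x^n‖ ≤ (2/√((3/2)α − 1/μ − 4C))·‖e_A‖ + ‖x_A − x‖. -/
/-!
Write `u = xⁿ`, `v = xⁿ⁺¹`, `T = Φ_u` and `e = y - Φ u - T (x_A - u)`. Comparing the projection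
`v` with the competitor `x_A ∈ A` and expanding the squares gives
`‖u - v‖² + 2μ⟪T (x_A - v), T (x_A - u) + e⟫ ≤ ‖x_A - u‖²`. Polarization of the inner product,
`μ‖T (u - v)‖² ≤ ‖u - v‖²` (from `β ≤ 1/μ`), Young's inequality on `⟪T (x_A - v), e⟫`, the lower
RIP bound and `‖e‖² ≤ 2‖e_A‖² + 2C‖x_A - u‖²` turn this into the one-step recursion
`(α/2)‖x_A - v‖² ≤ (1/μ - α + 4C)‖x_A - u‖² + 4‖e_A‖²`. Its contraction factor is `< 1` exactly
when `1/μ < (3/2)α - 4C`, so `‖x_A - xⁿ‖²` tends to at most `4‖e_A‖² / ((3/2)α - 1/μ - 4C)`, and the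
triangle inequality through `x_A` finishes the proof.
-/

open scoped RealInnerProductSpace
open Filter Topology

lemma norm_sub_sq_le_of_norm_sq_le {E : Type*} [SeminormedAddCommGroup E] {a b : E} {t : ℝ}
    (h : ‖b‖ ^ 2 ≤ t) : ‖a - b‖ ^ 2 ≤ 2 * ‖a‖ ^ 2 + 2 * t := by
  calc ‖a - b‖ ^ 2 ≤ (‖a‖ + ‖b‖) ^ 2 := pow_le_pow_left₀ (norm_nonneg _) (norm_sub_le a b) 2
    _ ≤ 2 * (‖a‖ ^ 2 + ‖b‖ ^ 2) := add_sq_le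
    _ ≤ 2 * ‖a‖ ^ 2 + 2 * t := by linarith

section InnerProductSpace

variable {E F : Type*} [NormedAddCommGroup E] [InnerProductSpace ℝ E]
  [NormedAddCommGroup F] [InnerProductSpace ℝ F]

lemma norm_sub_sq_add_inner_le_of_norm_add_smul_sub_le {u v w g : E} {μ : ℝ}
    (h : ‖u + μ • g - v‖ ≤ ‖u + μ • g - w‖) :
    ‖u - v‖ ^ 2 + 2 * μ * ⟪w - v, g⟫ ≤ ‖u - w‖ ^ 2 := by
  have hsq := pow_le_pow_left₀ (norm_nonneg _) h 2
  rw [add_sub_right_comm, add_sub_right_comm u, norm_add_sq_real, norm_add_sq_real,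
    real_inner_smul_right, real_inner_smul_right] at hsq
  have hsplit : ⟪w - v, g⟫ = ⟪u - v, g⟫ - ⟪u - w, g⟫ := by
    rw [← inner_sub_left, sub_sub_sub_cancel_left]
  rw [hsplit]
  linarith

variable [CompleteSpace E] [CompleteSpace F]

lemma iht_linear_step_bound (T : E →L[ℝ] F) {u v w : E} {e : F} {μ : ℝ} (hμ : 0 ≤ μ)
    (hproj : ‖u + μ • T.adjoint (T (w - u) + e) - v‖ ≤
      ‖u + μ • T.adjoint (T (w - u) + e) - w‖)
    (hcontr : μ * ‖T (u - v)‖ ^ 2 ≤ ‖u - v‖ ^ 2) :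
    μ * (‖T (w - v)‖ ^ 2 / 2 + ‖T (w - u)‖ ^ 2) ≤ ‖w - u‖ ^ 2 + 2 * μ * ‖e‖ ^ 2 := by
  have hmain := norm_sub_sq_add_inner_le_of_norm_add_smul_sub_le hproj
  rw [ContinuousLinearMap.adjoint_inner_right, inner_add_right, norm_sub_rev u w] at hmain
  have hpolar : 2 * ⟪T (w - v), T (w - u)⟫ =
      ‖T (w - v)‖ ^ 2 + ‖T (w - u)‖ ^ 2 - ‖T (u - v)‖ ^ 2 := by
    have h := norm_sub_sq_real (T (w - v)) (T (w - u))
    rw [← map_sub, sub_sub_sub_cancel_left] at h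
    linarith
  -- Young's inequality `2⟪a, e⟫ ≥ -‖a‖²/2 - 2‖e‖²`
  have hyoung : -(‖T (w - v)‖ ^ 2 / 2 + 2 * ‖e‖ ^ 2) ≤ 2 * ⟪T (w - v), e⟫ := by
    nlinarith [neg_abs_le ⟪T (w - v), e⟫, abs_real_inner_le_norm (T (w - v)) e,
      sq_nonneg (‖T (w - v)‖ - 2 * ‖e‖)]
  nlinarith [mul_le_mul_of_nonneg_left hyoung hμ]

lemma iht_sq_dist_step_le {Φ : E → F} {Φ' : E → E →L[ℝ] F} {A : Set E} {y : F} {μ α β C : ℝ}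
    (hμ : 0 < μ) (hβμ : β ≤ 1 / μ)
    (hRIP : ∀ u ∈ A, ∀ v ∈ A, ∀ w ∈ A,
      α * ‖u - v‖ ^ 2 ≤ ‖Φ' w (u - v)‖ ^ 2 ∧ ‖Φ' w (u - v)‖ ^ 2 ≤ β * ‖u - v‖ ^ 2)
    (hlin : ∀ u ∈ A, ∀ v ∈ A, ‖Φ u - Φ v - (Φ' u) (u - v)‖ ^ 2 ≤ C * ‖u - v‖ ^ 2)
    {u v xA : E} (hu : u ∈ A) (hv : v ∈ A) (hxA : xA ∈ A)
    (hproj : ‖u + μ • (Φ' u).adjoint (y - Φ u) - v‖ ≤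
      ‖u + μ • (Φ' u).adjoint (y - Φ u) - xA‖) :
    α / 2 * ‖xA - v‖ ^ 2 ≤ (1 / μ - α + 4 * C) * ‖xA - u‖ ^ 2 + 4 * ‖y - Φ xA‖ ^ 2 := by
  set T := Φ' u
  set e := y - Φ u - T (xA - u)
  have hres : y - Φ u = T (xA - u) + e := (add_sub_cancel _ _).symm
  have he : ‖e‖ ^ 2 ≤ 2 * ‖y - Φ xA‖ ^ 2 + 2 * (C * ‖xA - u‖ ^ 2) := by
    have hsplit : e = (y - Φ xA) - (Φ u - Φ xA - T (u - xA)) := by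
      simp only [e, map_sub]
      abel
    rw [hsplit, ← norm_neg (xA - u), neg_sub]
    exact norm_sub_sq_le_of_norm_sq_le (hlin u hu xA hxA)
  have hcontr : μ * ‖T (u - v)‖ ^ 2 ≤ ‖u - v‖ ^ 2 := by
    have hμβ : μ * β ≤ 1 := by rwa [le_div_iff₀' hμ] at hβμ
    nlinarith [(hRIP u hu v hv u hu).2, sq_nonneg ‖u - v‖]
  have hstep := iht_linear_step_bound T hμ.le (hres ▸ hproj) hcontr
  have hlow_v := (hRIP xA hxA v hv u hu).1
  have hlow_u := (hRIP xA hxA u hu u hu).1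
  rw [← mul_le_mul_iff_right₀ hμ]
  have hinv : μ * ((1 / μ - α + 4 * C) * ‖xA - u‖ ^ 2) =
      ‖xA - u‖ ^ 2 - μ * α * ‖xA - u‖ ^ 2 + 4 * μ * C * ‖xA - u‖ ^ 2 := by
    field_simp
  linarith [mul_le_mul_of_nonneg_left hlow_v hμ.le, mul_le_mul_of_nonneg_left hlow_u hμ.le,
    mul_le_mul_of_nonneg_left he hμ.le]

end InnerProductSpace

lemma le_add_pow_mul_of_mul_succ_le {a : ℕ → ℝ} {b c d : ℝ} (hd : 0 ≤ d) (hdc : d < c)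
    (h : ∀ n, c * a (n + 1) ≤ d * a n + b) (n : ℕ) :
    a n ≤ b / (c - d) + (d / c) ^ n * (a 0 - b / (c - d)) := by
  have hc : 0 < c := hd.trans_lt hdc
  set K := b / (c - d)
  -- `K` is the fixed point of `t ↦ (d * t + b) / c`
  have hK : c * K = d * K + b := by
    simp only [K]
    field_simp [(sub_pos.2 hdc).ne']
    ring
  induction n with
  | zero => simp
  | succ n ih =>
    have hcontr : c * (a (n + 1) - K) ≤ c * (d / c * (a n - K)) := by
      have : c * (d / c * (a n - K)) = d * (a n - K) := by field_simp
      linarith [h n]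
    have := le_of_mul_le_mul_left hcontr hc
    rw [pow_succ']
    nlinarith [mul_le_mul_of_nonneg_left ih (div_nonneg hd hc.le)]

lemma limsup_norm_sub_le_of_norm_sub_sq_le {E : Type*} [SeminormedAddCommGroup E]
    {s : ℕ → E} {x z : E} {K P r : ℝ} (hr0 : 0 ≤ r) (hr1 : r < 1)
    (h : ∀ n, ‖z - s n‖ ^ 2 ≤ K + r ^ n * P) :
    limsup (fun n ↦ ‖x - s n‖) atTop ≤ √K + ‖z - x‖ := by
  have hbound n : ‖x - s n‖ ≤ √(K + r ^ n * P) + ‖z - x‖ := by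
    calc ‖x - s n‖ ≤ ‖x - z‖ + ‖z - s n‖ := norm_sub_le_norm_sub_add_norm_sub x z (s n)
      _ = ‖z - s n‖ + ‖z - x‖ := by rw [norm_sub_rev x z, add_comm]
      _ ≤ √(K + r ^ n * P) + ‖z - x‖ := by
        gcongr
        exact Real.le_sqrt_of_sq_le (h n)
  have hlim : Tendsto (fun n ↦ √(K + r ^ n * P) + ‖z - x‖) atTop (𝓝 (√K + ‖z - x‖)) := by
    have := ((tendsto_pow_atTop_nhds_zero_of_lt_one hr0 hr1).mul_const P).const_add K
    rw [zero_mul, add_zero] at this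
    exact (this.sqrt).add_const _
  calc limsup (fun n ↦ ‖x - s n‖) atTop
      ≤ limsup (fun n ↦ √(K + r ^ n * P) + ‖z - x‖) atTop :=
        limsup_le_limsup (.of_forall hbound) (isCoboundedUnder_le_of_le atTop fun _ ↦ norm_nonneg _)
          hlim.isBoundedUnder_le
    _ = √K + ‖z - x‖ := hlim.limsup_eq

theorem nonlinear_iht_limsup_recovery_bound_general
    {N M : ℕ}
    (Φ : EuclideanSpace ℝ (Fin N) → EuclideanSpace ℝ (Fin M))
    (Φ' : EuclideanSpace ℝ (Fin N) → (EuclideanSpace ℝ (Fin N) →L[ℝ] EuclideanSpace ℝ (Fin M)))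
    (A : Set (EuclideanSpace ℝ (Fin N))) (hA0 : (0 : EuclideanSpace ℝ (Fin N)) ∈ A)
    (PA : EuclideanSpace ℝ (Fin N) → EuclideanSpace ℝ (Fin N))
    (hPA : ∀ z, PA z ∈ A ∧ ∀ a ∈ A, ‖z - PA z‖ ≤ ‖z - a‖)
    (y : EuclideanSpace ℝ (Fin M)) (μ α β : ℝ)
    (hμ : 0 < μ) (hαβ : α ≤ β) (hβμ : β ≤ 1 / μ)
    (hRIP : ∀ u ∈ A, ∀ v ∈ A, ∀ w ∈ A,
      α * ‖u - v‖ ^ 2 ≤ ‖Φ' w (u - v)‖ ^ 2 ∧ ‖Φ' w (u - v)‖ ^ 2 ≤ β * ‖u - v‖ ^ 2)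
    (xseq : ℕ → EuclideanSpace ℝ (Fin N)) (hx0 : xseq 0 = 0)
    (hxit : ∀ n, xseq (n + 1) =
      PA (xseq n + μ • (ContinuousLinearMap.adjoint (Φ' (xseq n))) (y - Φ (xseq n))))
    (xA : EuclideanSpace ℝ (Fin N)) (hxA : xA ∈ A)
    (C : ℝ) (hC : 0 ≤ C)
    (hlin : ∀ u ∈ A, ∀ v ∈ A, ‖Φ u - Φ v - (Φ' u) (u - v)‖ ^ 2 ≤ C * ‖u - v‖ ^ 2)
    (hμC : 1 / μ < (3 / 2) * α - 4 * C) :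
    ∀ x : EuclideanSpace ℝ (Fin N),
      Filter.limsup (fun n => ‖x - xseq n‖) Filter.atTop ≤
        (2 / Real.sqrt ((3 / 2) * α - 1 / μ - 4 * C)) * ‖y - Φ xA‖ + ‖xA - x‖ := by
  intro x
  have hmem : ∀ n, xseq n ∈ A := by
    rintro (_ | n)
    · exact hx0 ▸ hA0
    · exact hxit n ▸ (hPA _).1
  have hstep n := iht_sq_dist_step_le hμ hβμ hRIP hlin (hmem n) (hmem (n + 1)) hxA
    (hxit n ▸ (hPA _).2 xA hxA)
  have hd : 0 ≤ 1 / μ - α + 4 * C := by linarith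
  have hdc : 1 / μ - α + 4 * C < α / 2 := by linarith
  have hκ : α / 2 - (1 / μ - α + 4 * C) = (3 / 2) * α - 1 / μ - 4 * C := by ring
  have hlimsup := limsup_norm_sub_le_of_norm_sub_sq_le (x := x) (div_nonneg hd (by linarith))
    ((div_lt_one (by linarith)).2 hdc) (le_add_pow_mul_of_mul_succ_le hd hdc hstep)
  have hsqrt : √(4 * ‖y - Φ xA‖ ^ 2 / ((3 / 2) * α - 1 / μ - 4 * C)) =
      2 / √((3 / 2) * α - 1 / μ - 4 * C) * ‖y - Φ xA‖ := by
    rw [Real.sqrt_div' _ (by linarith), Real.sqrt_mul' _ (sq_nonneg _),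
      Real.sqrt_sq (norm_nonneg _), show (4 : ℝ) = 2 ^ 2 by norm_num,
      Real.sqrt_sq zero_le_two, mul_div_right_comm]
  rwa [hκ, hsqrt] at hlimsup

/-- Under the RIP hypothesis with `0 < α ≤ β ≤ 1/μ`, the linearization-error
bound `‖Φ(u) − Φ(v) − Φ_u(u − v)‖² ≤ C‖u − v‖²` on `A` with `C ≥ 0`, and `1/μ < (3/2)α − 4C`,
with `e_A := y − Φ(x_A)`, for every `x` the nonlinear IHT iterates satisfy
`limsup_{n→∞} ‖x − x^n‖ ≤ (2/√((3/2)α − 1/μ − 4C))‖e_A‖ + ‖x_A − x‖`. -/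
theorem nonlinear_iht_limsup_recovery_bound
    {N M : ℕ}
    (Φ : EuclideanSpace ℝ (Fin N) → EuclideanSpace ℝ (Fin M))
    (Φ' : EuclideanSpace ℝ (Fin N) → (EuclideanSpace ℝ (Fin N) →L[ℝ] EuclideanSpace ℝ (Fin M)))
    (hΦ : ∀ u, HasFDerivAt Φ (Φ' u) u)
    (A : Set (EuclideanSpace ℝ (Fin N))) (hA0 : (0 : EuclideanSpace ℝ (Fin N)) ∈ A)
    (PA : EuclideanSpace ℝ (Fin N) → EuclideanSpace ℝ (Fin N))
    (hPA : ∀ z, PA z ∈ A ∧ ∀ a ∈ A, ‖z - PA z‖ ≤ ‖z - a‖)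
    (y : EuclideanSpace ℝ (Fin M)) (μ α β : ℝ)
    (hμ : 0 < μ) (hα : 0 < α) (hαβ : α ≤ β) (hβμ : β ≤ 1 / μ)
    (hRIP : ∀ u ∈ A, ∀ v ∈ A, ∀ w ∈ A,
      α * ‖u - v‖ ^ 2 ≤ ‖Φ' w (u - v)‖ ^ 2 ∧ ‖Φ' w (u - v)‖ ^ 2 ≤ β * ‖u - v‖ ^ 2)
    (xseq : ℕ → EuclideanSpace ℝ (Fin N)) (hx0 : xseq 0 = 0)
    (hxit : ∀ n, xseq (n + 1) =
      PA (xseq n + μ • (ContinuousLinearMap.adjoint (Φ' (xseq n))) (y - Φ (xseq n))))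
    (xA : EuclideanSpace ℝ (Fin N)) (hxA : xA ∈ A)
    (C : ℝ) (hC : 0 ≤ C)
    (hlin : ∀ u ∈ A, ∀ v ∈ A, ‖Φ u - Φ v - (Φ' u) (u - v)‖ ^ 2 ≤ C * ‖u - v‖ ^ 2)
    (hμC : 1 / μ < (3 / 2) * α - 4 * C) :
    ∀ x : EuclideanSpace ℝ (Fin N),
      Filter.limsup (fun n => ‖x - xseq n‖) Filter.atTop ≤
        (2 / Real.sqrt ((3 / 2) * α - 1 / μ - 4 * C)) * ‖y - Φ xA‖ + ‖xA - x‖ :=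
  nonlinear_iht_limsup_recovery_bound_general Φ Φ' A hA0 PA hPA y μ α β hμ hαβ hβμ hRIP xseq hx0
    hxit xA hxA C hC hlin hμC
end

section
/- Suppose Φ̄ satisfies √α·‖z‖ ≤ ‖Φ̄ z‖ ≤ √β·‖z‖ for every z ∈ ℝ^N whose support has at most 2k elements, where 0 < α ≤ β, and suppose M·√β ≤ √α. Fix x* ∈ ℝ^N and let D_{x*} : ℝ^N → ℝ^N be the diagonal linear map (D_{x*} z)_i = h'(x*_i)·z_i. Then for all k-sparse vectors x₁, x₂ (each with support of at most k elements), (√α − M·√β)·‖x₁ − x₂‖ ≤ ‖Φ̄((I + D_{x*})(x₁ − x₂))‖ ≤ (1 + M)·√β·‖x₁ − x₂‖. -/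
/-!
With `z = x₁ - x₂`, the vectors `z`, `D z` and `z + D z` are all supported in
`supp x₁ ∪ supp x₂`, so the restricted isometry bounds apply to each of them, and
`‖D z‖ ≤ M ‖z‖` because `D` is diagonal with entries bounded by `M`. Both inequalities
then follow from the triangle inequality applied to `Φ̄ (z + D z) = Φ̄ z + Φ̄ (D z)`.
-/

open Set

namespace EuclideanSpace

variable {𝕜 ι : Type*} [RCLike 𝕜]

theorem ncard_support_sub_le [Finite ι] (x y : EuclideanSpace 𝕜 ι) :
    {i | (x - y) i ≠ 0}.ncard ≤ {i | x i ≠ 0}.ncard + {i | y i ≠ 0}.ncard :=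
  (ncard_le_ncard (Function.support_sub x y) (toFinite _)).trans (ncard_union_le _ _)

theorem ncard_support_le_of_apply_eq_mul [Finite ι] {w z : EuclideanSpace 𝕜 ι} (c : ι → 𝕜)
    (hw : ∀ i, w i = c i * z i) : {i | w i ≠ 0}.ncard ≤ {i | z i ≠ 0}.ncard :=
  ncard_le_ncard (fun i hi hzi ↦ hi (by rw [hw, hzi, mul_zero])) (toFinite _)

theorem norm_le_of_apply_eq_mul [Fintype ι] {w z : EuclideanSpace 𝕜 ι} {c : ι → 𝕜} {K : ℝ}
    (hK : 0 ≤ K) (hc : ∀ i, ‖c i‖ ≤ K) (hw : ∀ i, w i = c i * z i) : ‖w‖ ≤ K * ‖z‖ := by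
  rw [EuclideanSpace.norm_eq w, EuclideanSpace.norm_eq z, ← Real.sqrt_sq hK,
    ← Real.sqrt_mul (sq_nonneg K), Finset.mul_sum]
  gcongr with i
  rw [hw, norm_mul, mul_pow]
  gcongr
  exact hc i

end EuclideanSpace

open EuclideanSpace in
theorem perturbed_matrix_restricted_isometry_general
    {N M k : ℕ}
    (Φbar : EuclideanSpace ℝ (Fin N) →ₗ[ℝ] EuclideanSpace ℝ (Fin M))
    (α β Mc : ℝ)
    (h : ℝ → ℝ)
    (hbd : ∀ t : ℝ, |deriv h t| ≤ Mc)
    (hRIP : ∀ z : EuclideanSpace ℝ (Fin N), {i | z i ≠ 0}.ncard ≤ 2 * k →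
      Real.sqrt α * ‖z‖ ≤ ‖Φbar z‖ ∧ ‖Φbar z‖ ≤ Real.sqrt β * ‖z‖)
    (xstar : EuclideanSpace ℝ (Fin N))
    (D : EuclideanSpace ℝ (Fin N) →ₗ[ℝ] EuclideanSpace ℝ (Fin N))
    (hD : ∀ (z : EuclideanSpace ℝ (Fin N)) (i : Fin N), D z i = deriv h (xstar i) * z i) :
    ∀ x₁ x₂ : EuclideanSpace ℝ (Fin N),
      {i | x₁ i ≠ 0}.ncard ≤ k → {i | x₂ i ≠ 0}.ncard ≤ k →
      (Real.sqrt α - Mc * Real.sqrt β) * ‖x₁ - x₂‖ ≤ ‖Φbar ((x₁ - x₂) + D (x₁ - x₂))‖ ∧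
        ‖Φbar ((x₁ - x₂) + D (x₁ - x₂))‖ ≤ (1 + Mc) * Real.sqrt β * ‖x₁ - x₂‖ := by
  intro x₁ x₂ h₁ h₂
  set z := x₁ - x₂
  have hz : {i | z i ≠ 0}.ncard ≤ 2 * k := (ncard_support_sub_le x₁ x₂).trans (by omega)
  have hDz : ‖D z‖ ≤ Mc * ‖z‖ :=
    norm_le_of_apply_eq_mul ((abs_nonneg _).trans (hbd 0)) (fun i ↦ hbd _) (hD z)
  have hΦDz : ‖Φbar (D z)‖ ≤ Real.sqrt β * (Mc * ‖z‖) :=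
    (hRIP _ ((ncard_support_le_of_apply_eq_mul _ (hD z)).trans hz)).2.trans (by gcongr)
  have hzDz : {i | (z + D z) i ≠ 0}.ncard ≤ 2 * k :=
    (ncard_support_le_of_apply_eq_mul (fun i ↦ 1 + deriv h (xstar i))
      (fun i ↦ by simp only [PiLp.add_apply, hD]; ring)).trans hz
  constructor
  · calc (Real.sqrt α - Mc * Real.sqrt β) * ‖z‖
        = Real.sqrt α * ‖z‖ - Real.sqrt β * (Mc * ‖z‖) := by ring
      _ ≤ ‖Φbar z‖ - ‖Φbar (D z)‖ := sub_le_sub (hRIP z hz).1 hΦDz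
      _ ≤ ‖Φbar (z + D z)‖ := map_add Φbar z (D z) ▸ norm_sub_le_norm_add _ _
  · calc ‖Φbar (z + D z)‖ ≤ Real.sqrt β * ‖z + D z‖ := (hRIP _ hzDz).2
      _ ≤ Real.sqrt β * (‖z‖ + Mc * ‖z‖) := by gcongr; exact (norm_add_le _ _).trans (by linarith)
      _ = (1 + Mc) * Real.sqrt β * ‖z‖ := by ring

/-- If `Φ̄` satisfies `√α‖z‖ ≤ ‖Φ̄z‖ ≤ √β‖z‖` on `2k`-sparse vectors, with
`0 < α ≤ β` and `M√β ≤ √α`, and `D_{x*}` is the diagonal map with entries `h'(x*_i)`, then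
for all `k`-sparse `x₁, x₂`:
`(√α − M√β)‖x₁ − x₂‖ ≤ ‖Φ̄((I + D_{x*})(x₁ − x₂))‖ ≤ (1 + M)√β‖x₁ − x₂‖`. -/
theorem perturbed_matrix_restricted_isometry
    {N M k : ℕ}
    (Φbar : EuclideanSpace ℝ (Fin N) →ₗ[ℝ] EuclideanSpace ℝ (Fin M))
    (α β Mc : ℝ) (hα : 0 < α) (hαβ : α ≤ β) (hMc : 0 ≤ Mc)
    (h : ℝ → ℝ) (hdiff : ∀ t : ℝ, DifferentiableAt ℝ h t)
    (hbd : ∀ t : ℝ, |deriv h t| ≤ Mc)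
    (hRIP : ∀ z : EuclideanSpace ℝ (Fin N), {i | z i ≠ 0}.ncard ≤ 2 * k →
      Real.sqrt α * ‖z‖ ≤ ‖Φbar z‖ ∧ ‖Φbar z‖ ≤ Real.sqrt β * ‖z‖)
    (hMβα : Mc * Real.sqrt β ≤ Real.sqrt α)
    (xstar : EuclideanSpace ℝ (Fin N))
    (D : EuclideanSpace ℝ (Fin N) →ₗ[ℝ] EuclideanSpace ℝ (Fin N))
    (hD : ∀ (z : EuclideanSpace ℝ (Fin N)) (i : Fin N), D z i = deriv h (xstar i) * z i) :
    ∀ x₁ x₂ : EuclideanSpace ℝ (Fin N),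
      {i | x₁ i ≠ 0}.ncard ≤ k → {i | x₂ i ≠ 0}.ncard ≤ k →
      (Real.sqrt α - Mc * Real.sqrt β) * ‖x₁ - x₂‖ ≤ ‖Φbar ((x₁ - x₂) + D (x₁ - x₂))‖ ∧
        ‖Φbar ((x₁ - x₂) + D (x₁ - x₂))‖ ≤ (1 + Mc) * Real.sqrt β * ‖x₁ - x₂‖ :=
  perturbed_matrix_restricted_isometry_general Φbar α β Mc h hbd hRIP xstar D hD
end

section
/- Suppose ‖Φ̄ z‖² ≤ β·‖z‖² for all z ∈ ℝ^N, where β ≥ 0. Define Φ : ℝ^N → ℝ^M by Φ(x) = Φ̄(x + h⊙x), where (h⊙x)_i = h(x_i), and for u ∈ ℝ^N define the linear map L_u : ℝ^N → ℝ^M by L_u z = Φ̄(z + D_u z) with (D_u z)_i = h'(u_i)·z_i. Then for all x₁, x₂ ∈ ℝ^N, ‖Φ(x₁) − Φ(x₂) − L_{x₁}(x₁ − x₂)‖ ≤ 2·M·√β·‖x₁ − x₂‖. -/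
/-! The remainder `Φ x₁ - Φ x₂ - L_{x₁}(x₁ - x₂)` is `Φ̄ w` with
`w_i = h(x₁ i) - h(x₂ i) - h'(x₁ i)(x₁ i - x₂ i)`. By the mean value theorem `h` is
`M`-Lipschitz, so `|w_i| ≤ 2M|x₁ i - x₂ i|`; summing squares gives `‖w‖ ≤ 2M‖x₁ - x₂‖`, and
`‖Φ̄ w‖ ≤ √β‖w‖`. -/

theorem norm_le_sqrt_mul_norm_of_sq_norm_le {E : Type*} [SeminormedAddCommGroup E] {x : E}
    {β r : ℝ} (hr : 0 ≤ r) (hx : ‖x‖ ^ 2 ≤ β * r ^ 2) : ‖x‖ ≤ √β * r := by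
  calc ‖x‖ = √(‖x‖ ^ 2) := (Real.sqrt_sq (norm_nonneg x)).symm
    _ ≤ √(β * r ^ 2) := Real.sqrt_le_sqrt hx
    _ = √β * r := by rw [Real.sqrt_mul' β (sq_nonneg r), Real.sqrt_sq hr]

theorem PiLp.norm_le_mul_norm_of_forall_norm_le {ι : Type*} [Fintype ι] {β γ : ι → Type*}
    [∀ i, SeminormedAddCommGroup (β i)] [∀ i, SeminormedAddCommGroup (γ i)]
    {x : PiLp 2 β} {y : PiLp 2 γ} {c : ℝ} (hc : 0 ≤ c) (hxy : ∀ i, ‖x i‖ ≤ c * ‖y i‖) :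
    ‖x‖ ≤ c * ‖y‖ := by
  rw [← Real.sqrt_sq hc]
  refine norm_le_sqrt_mul_norm_of_sq_norm_le (norm_nonneg y) ?_
  rw [PiLp.norm_sq_eq_of_L2, PiLp.norm_sq_eq_of_L2, Finset.mul_sum]
  gcongr with i
  calc ‖x i‖ ^ 2 ≤ (c * ‖y i‖) ^ 2 := by gcongr; exact hxy i
    _ = c ^ 2 * ‖y i‖ ^ 2 := mul_pow c _ 2

theorem abs_sub_sub_deriv_mul_le {h : ℝ → ℝ} {C : ℝ} (hdiff : ∀ t, DifferentiableAt ℝ h t)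
    (hbd : ∀ t, |deriv h t| ≤ C) (a b : ℝ) :
    |h a - h b - deriv h a * (a - b)| ≤ 2 * C * |a - b| := by
  have hlip : |h a - h b| ≤ C * |a - b| :=
    Convex.norm_image_sub_le_of_norm_deriv_le (fun t _ => hdiff t) (fun t _ => hbd t)
      convex_univ (Set.mem_univ b) (Set.mem_univ a)
  have hlin : |deriv h a * (a - b)| ≤ C * |a - b| := by
    rw [abs_mul]
    exact mul_le_mul_of_nonneg_right (hbd a) (abs_nonneg _)
  calc |h a - h b - deriv h a * (a - b)| ≤ |h a - h b| + |deriv h a * (a - b)| := abs_sub _ _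
    _ ≤ 2 * C * |a - b| := by linarith

theorem nonlinear_sensing_linearization_error_bound_general
    {N M : ℕ}
    (Φbar : EuclideanSpace ℝ (Fin N) →ₗ[ℝ] EuclideanSpace ℝ (Fin M))
    (β Mc : ℝ)
    (hop : ∀ z : EuclideanSpace ℝ (Fin N), ‖Φbar z‖ ^ 2 ≤ β * ‖z‖ ^ 2)
    (h : ℝ → ℝ) (hdiff : ∀ t : ℝ, DifferentiableAt ℝ h t)
    (hbd : ∀ t : ℝ, |deriv h t| ≤ Mc)
    (happ : EuclideanSpace ℝ (Fin N) → EuclideanSpace ℝ (Fin N))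
    (hhapp : ∀ (x : EuclideanSpace ℝ (Fin N)) (i : Fin N), happ x i = h (x i))
    (D : EuclideanSpace ℝ (Fin N) → EuclideanSpace ℝ (Fin N) →ₗ[ℝ] EuclideanSpace ℝ (Fin N))
    (hD : ∀ (u z : EuclideanSpace ℝ (Fin N)) (i : Fin N), D u z i = deriv h (u i) * z i)
    (Φ : EuclideanSpace ℝ (Fin N) → EuclideanSpace ℝ (Fin M))
    (hΦ : ∀ x : EuclideanSpace ℝ (Fin N), Φ x = Φbar (x + happ x)) :
    ∀ x₁ x₂ : EuclideanSpace ℝ (Fin N),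
      ‖Φ x₁ - Φ x₂ - Φbar ((x₁ - x₂) + D x₁ (x₁ - x₂))‖ ≤
        2 * Mc * Real.sqrt β * ‖x₁ - x₂‖ := by
  intro x₁ x₂
  set w := happ x₁ - happ x₂ - D x₁ (x₁ - x₂)
  have hremainder : Φ x₁ - Φ x₂ - Φbar ((x₁ - x₂) + D x₁ (x₁ - x₂)) = Φbar w := by
    simp only [hΦ, w, ← map_sub]
    abel_nf
  have hMc : 0 ≤ Mc := (abs_nonneg _).trans (hbd 0)
  have hw : ‖w‖ ≤ 2 * Mc * ‖x₁ - x₂‖ := by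
    refine PiLp.norm_le_mul_norm_of_forall_norm_le (by positivity) fun i => ?_
    simp only [w, PiLp.sub_apply, hhapp, hD, Real.norm_eq_abs]
    exact abs_sub_sub_deriv_mul_le hdiff hbd (x₁ i) (x₂ i)
  calc ‖Φ x₁ - Φ x₂ - Φbar ((x₁ - x₂) + D x₁ (x₁ - x₂))‖ = ‖Φbar w‖ := by rw [hremainder]
    _ ≤ √β * ‖w‖ := norm_le_sqrt_mul_norm_of_sq_norm_le (norm_nonneg w) (hop w)
    _ ≤ √β * (2 * Mc * ‖x₁ - x₂‖) := by gcongr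
    _ = 2 * Mc * √β * ‖x₁ - x₂‖ := by ring

/-- If `‖Φ̄z‖² ≤ β‖z‖²` for all `z`, `Φ(x) = Φ̄(x + h⊙x)` and
`L_u z = Φ̄(z + D_u z)` with `(D_u z)_i = h'(u_i)z_i`, then for all `x₁, x₂`:
`‖Φ(x₁) − Φ(x₂) − L_{x₁}(x₁ − x₂)‖ ≤ 2M√β‖x₁ − x₂‖`. -/
theorem nonlinear_sensing_linearization_error_bound
    {N M : ℕ}
    (Φbar : EuclideanSpace ℝ (Fin N) →ₗ[ℝ] EuclideanSpace ℝ (Fin M))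
    (β Mc : ℝ) (hβ : 0 ≤ β) (hMc : 0 ≤ Mc)
    (hop : ∀ z : EuclideanSpace ℝ (Fin N), ‖Φbar z‖ ^ 2 ≤ β * ‖z‖ ^ 2)
    (h : ℝ → ℝ) (hdiff : ∀ t : ℝ, DifferentiableAt ℝ h t)
    (hbd : ∀ t : ℝ, |deriv h t| ≤ Mc)
    (happ : EuclideanSpace ℝ (Fin N) → EuclideanSpace ℝ (Fin N))
    (hhapp : ∀ (x : EuclideanSpace ℝ (Fin N)) (i : Fin N), happ x i = h (x i))
    (D : EuclideanSpace ℝ (Fin N) → EuclideanSpace ℝ (Fin N) →ₗ[ℝ] EuclideanSpace ℝ (Fin N))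
    (hD : ∀ (u z : EuclideanSpace ℝ (Fin N)) (i : Fin N), D u z i = deriv h (u i) * z i)
    (Φ : EuclideanSpace ℝ (Fin N) → EuclideanSpace ℝ (Fin M))
    (hΦ : ∀ x : EuclideanSpace ℝ (Fin N), Φ x = Φbar (x + happ x)) :
    ∀ x₁ x₂ : EuclideanSpace ℝ (Fin N),
      ‖Φ x₁ - Φ x₂ - Φbar ((x₁ - x₂) + D x₁ (x₁ - x₂))‖ ≤
        2 * Mc * Real.sqrt β * ‖x₁ - x₂‖ :=
  nonlinear_sensing_linearization_error_bound_general Φbar β Mc hop h hdiff hbd happ hhapp D hD Φ hΦ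
end

section
/- Assume f(z) ≥ 0 for all z, the Restricted Strict Convexity Property with constants 0 < α ≤ β on A + A + A, μ > 0, and β ≤ 1/μ. Let x_opt ∈ A satisfy f(x_opt) ≤ f(z) for all z ∈ A. Then the projected-gradient (IHT) iterates x^{n+1} = P_A(x^n − (μ/2)·∇f(x^n)) satisfy, for every n ≥ 0, ‖x^{n+1} − x_opt‖² ≤ 4·(1 − μα)·‖x^n − x_opt‖² + 4·μ·f(x_opt). -/
/-!
The points `x n`, `x (n + 1)` and `xopt` lie in a single subspace `K = A_i + A_j + A_k ⊆ A + A + A`,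
on which the convexity bounds hold. Let `p` be the orthogonal projection onto `K` of the gradient
step `y = x n - (μ / 2) ∇f(x n)`. By Pythagoras in `K`, `x (n + 1)` is at least as close to `p` as
`xopt` is, so `‖x (n + 1) - xopt‖ ≤ 2 ‖p - xopt‖`. Expanding `‖p - xopt‖²`, the lower convexity
bound at `(xopt, x n)` controls the linear term, and the upper bound along the projected gradient
together with `f ≥ 0` and `μβ ≤ 1` controls the quadratic term by `μ f(x n)`, which cancels.
-/

open scoped InnerProductSpace Pointwise

section

variable {E : Type*} [NormedAddCommGroup E] [InnerProductSpace ℝ E]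

def RestrictedStrictConvexity (f : E → ℝ) (g : E → E) (S : Set E) (α β : ℝ) : Prop :=
  ∀ x₁ x₂, x₁ - x₂ ∈ S →
    α * ‖x₁ - x₂‖ ^ 2 ≤ f x₁ - f x₂ - ⟪g x₂, x₁ - x₂⟫_ℝ ∧
      f x₁ - f x₂ - ⟪g x₂, x₁ - x₂⟫_ℝ ≤ β * ‖x₁ - x₂‖ ^ 2

namespace Submodule

variable {K : Submodule ℝ E} [K.HasOrthogonalProjection] {y a b : E}

theorem norm_sub_sq_eq_norm_sub_starProjection_sq_add (hb : b ∈ K) :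
    ‖y - b‖ ^ 2 = ‖y - K.starProjection y‖ ^ 2 + ‖K.starProjection y - b‖ ^ 2 := by
  have horth : ⟪y - K.starProjection y, K.starProjection y - b⟫_ℝ = 0 :=
    starProjection_inner_eq_zero y _ (K.sub_mem (K.starProjection_apply_mem y) hb)
  rw [← sub_add_sub_cancel y (K.starProjection y) b, norm_add_sq_real, horth]
  ring

theorem norm_starProjection_sub_le_of_norm_sub_le (ha : a ∈ K) (hb : b ∈ K)
    (h : ‖y - b‖ ≤ ‖y - a‖) : ‖K.starProjection y - b‖ ≤ ‖K.starProjection y - a‖ := by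
  have hsq : ‖y - b‖ ^ 2 ≤ ‖y - a‖ ^ 2 := by gcongr
  rw [norm_sub_sq_eq_norm_sub_starProjection_sq_add ha,
    norm_sub_sq_eq_norm_sub_starProjection_sq_add hb] at hsq
  exact le_of_sq_le_sq (by linarith) (norm_nonneg _)

theorem sq_norm_sub_le_four_mul_sq_norm_starProjection_sub (ha : a ∈ K) (hb : b ∈ K)
    (h : ‖y - b‖ ≤ ‖y - a‖) : ‖b - a‖ ^ 2 ≤ 4 * ‖K.starProjection y - a‖ ^ 2 := by
  have hle : ‖b - a‖ ≤ 2 * ‖K.starProjection y - a‖ := by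
    calc ‖b - a‖ ≤ ‖b - K.starProjection y‖ + ‖K.starProjection y - a‖ :=
          norm_sub_le_norm_sub_add_norm_sub _ _ _
      _ = ‖K.starProjection y - b‖ + ‖K.starProjection y - a‖ := by rw [norm_sub_rev b]
      _ ≤ 2 * ‖K.starProjection y - a‖ := by
          linarith [norm_starProjection_sub_le_of_norm_sub_le ha hb h]
  calc ‖b - a‖ ^ 2 ≤ (2 * ‖K.starProjection y - a‖) ^ 2 := by gcongr
    _ = 4 * ‖K.starProjection y - a‖ ^ 2 := by ring

theorem exists_mem_mem_mem_coe_subset_iUnion_add_add {R M ι : Type*} [Semiring R]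
    [AddCommMonoid M] [Module R M] {p : ι → Submodule R M} {a b c : M}
    (ha : a ∈ ⋃ i, (p i : Set M)) (hb : b ∈ ⋃ i, (p i : Set M)) (hc : c ∈ ⋃ i, (p i : Set M)) :
    ∃ K : Submodule R M, a ∈ K ∧ b ∈ K ∧ c ∈ K ∧
      (K : Set M) ⊆ (⋃ i, (p i : Set M)) + (⋃ i, (p i : Set M)) + ⋃ i, (p i : Set M) := by
  obtain ⟨i, hi⟩ := Set.mem_iUnion.1 ha
  obtain ⟨j, hj⟩ := Set.mem_iUnion.1 hb
  obtain ⟨k, hk⟩ := Set.mem_iUnion.1 hc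
  refine ⟨p i ⊔ p j ⊔ p k, mem_sup_left (mem_sup_left hi), mem_sup_left (mem_sup_right hj),
    mem_sup_right hk, ?_⟩
  rw [coe_sup, coe_sup]
  gcongr <;> exact Set.subset_iUnion (fun i => (p i : Set M)) _

end Submodule

namespace RestrictedStrictConvexity

variable {f : E → ℝ} {g : E → E} {α β μ : ℝ}

theorem mono {S S' : Set E} (h : RestrictedStrictConvexity f g S' α β) (hS : S ⊆ S') :
    RestrictedStrictConvexity f g S α β :=
  fun x₁ x₂ hx => h x₁ x₂ (hS hx)

variable {K : Submodule ℝ E}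

theorem mul_sq_norm_le (h : RestrictedStrictConvexity f g K α β) (hf : ∀ z, 0 ≤ f z)
    (hμ : 0 ≤ μ) (hμβ : μ * β ≤ 1) {x v : E} (hv : v ∈ K) (hgv : ⟪g x, v⟫_ℝ = ‖v‖ ^ 2) :
    μ / 4 * ‖v‖ ^ 2 ≤ f x := by
  have hstep : x - (μ / 2) • v - x = -((μ / 2) • v) := by abel
  have hupper := (h (x - (μ / 2) • v) x (by rw [hstep]; exact K.neg_mem (K.smul_mem _ hv))).2
  rw [hstep, inner_neg_right, real_inner_smul_right, hgv, norm_neg, norm_smul,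
    Real.norm_of_nonneg (by linarith), mul_pow] at hupper
  nlinarith [hf (x - (μ / 2) • v), mul_nonneg (mul_nonneg hμ (sq_nonneg ‖v‖)) (sub_nonneg.2 hμβ)]

theorem sq_norm_starProjection_gradient_step_sub_le [K.HasOrthogonalProjection]
    (h : RestrictedStrictConvexity f g K α β) (hf : ∀ z, 0 ≤ f z) (hμ : 0 ≤ μ)
    (hμβ : μ * β ≤ 1) {x a : E} (hx : x ∈ K) (ha : a ∈ K) :
    ‖K.starProjection (x - (μ / 2) • g x) - a‖ ^ 2 ≤
      (1 - μ * α) * ‖x - a‖ ^ 2 + μ * f a := by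
  set v := K.starProjection (g x) with hv
  have hgK : ∀ w ∈ K, ⟪g x, w⟫_ℝ = ⟪v, w⟫_ℝ := fun w hw => by
    rw [hv, K.inner_starProjection_left_eq_right, K.starProjection_eq_self_iff.2 hw]
  have hstep : K.starProjection (x - (μ / 2) • g x) - a = (x - a) - (μ / 2) • v := by
    rw [map_sub, map_smul, K.starProjection_eq_self_iff.2 hx]; abel
  have hlower := (h a x (K.sub_mem ha hx)).1
  rw [hgK _ (K.sub_mem ha hx), norm_sub_rev, ← neg_sub x a, inner_neg_right,
    real_inner_comm] at hlower
  have hdescent := h.mul_sq_norm_le hf hμ hμβ (K.starProjection_apply_mem (g x))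
    (by rw [hgK v (K.starProjection_apply_mem _), real_inner_self_eq_norm_sq])
  rw [hstep, norm_sub_sq_real, real_inner_smul_right, norm_smul, Real.norm_of_nonneg (by linarith),
    mul_pow]
  linarith [mul_le_mul_of_nonneg_left hlower hμ, mul_le_mul_of_nonneg_left hdescent hμ]

end RestrictedStrictConvexity

end

theorem iht_nonlinear_objective_per_iteration_bound_general
    {N : ℕ} {ι : Type*}
    (Asub : ι → Submodule ℝ (EuclideanSpace ℝ (Fin N)))
    (A : Set (EuclideanSpace ℝ (Fin N))) (hA : A = ⋃ i, (Asub i : Set (EuclideanSpace ℝ (Fin N))))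
    (f : EuclideanSpace ℝ (Fin N) → ℝ) (hf : ∀ z, 0 ≤ f z)
    (gradf : EuclideanSpace ℝ (Fin N) → EuclideanSpace ℝ (Fin N))
    (α β μ : ℝ) (hμ : 0 < μ) (hβμ : β ≤ 1 / μ)
    (hRSCP : ∀ x₁ x₂ : EuclideanSpace ℝ (Fin N), x₁ - x₂ ∈ A + A + A →
      α * ‖x₁ - x₂‖ ^ 2 ≤ f x₁ - f x₂ - ⟪gradf x₂, x₁ - x₂⟫_ℝ ∧
        f x₁ - f x₂ - ⟪gradf x₂, x₁ - x₂⟫_ℝ ≤ β * ‖x₁ - x₂‖ ^ 2)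
    (PA : EuclideanSpace ℝ (Fin N) → EuclideanSpace ℝ (Fin N))
    (hPA : ∀ z, PA z ∈ A ∧ ∀ a ∈ A, ‖z - PA z‖ ≤ ‖z - a‖)
    (xopt : EuclideanSpace ℝ (Fin N)) (hxoptA : xopt ∈ A)
    (x : ℕ → EuclideanSpace ℝ (Fin N)) (hx0 : x 0 = 0)
    (hxit : ∀ n, x (n + 1) = PA (x n - (μ / 2) • gradf (x n))) :
    ∀ n : ℕ, ‖x (n + 1) - xopt‖ ^ 2 ≤
      4 * (1 - μ * α) * ‖x n - xopt‖ ^ 2 + 4 * μ * f xopt := by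
  subst hA
  have hxA : ∀ n, x n ∈ ⋃ i, (Asub i : Set (EuclideanSpace ℝ (Fin N)))
    | 0 => by
      obtain ⟨i, -⟩ := Set.mem_iUnion.1 hxoptA
      exact hx0 ▸ Set.mem_iUnion.2 ⟨i, (Asub i).zero_mem⟩
    | n + 1 => hxit n ▸ (hPA _).1
  intro n
  obtain ⟨K, hxK, hoptK, hnextK, hKA⟩ :=
    Submodule.exists_mem_mem_mem_coe_subset_iUnion_add_add (hxA n) hxoptA (hxA (n + 1))
  have hproj : ‖x n - (μ / 2) • gradf (x n) - x (n + 1)‖ ≤ ‖x n - (μ / 2) • gradf (x n) - xopt‖ :=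
    hxit n ▸ (hPA _).2 xopt hxoptA
  calc ‖x (n + 1) - xopt‖ ^ 2
      ≤ 4 * ‖K.starProjection (x n - (μ / 2) • gradf (x n)) - xopt‖ ^ 2 :=
        K.sq_norm_sub_le_four_mul_sq_norm_starProjection_sub hoptK hnextK hproj
    _ ≤ 4 * ((1 - μ * α) * ‖x n - xopt‖ ^ 2 + μ * f xopt) := by
        gcongr
        exact RestrictedStrictConvexity.sq_norm_starProjection_gradient_step_sub_le
          (RestrictedStrictConvexity.mono hRSCP hKA) hf hμ.le ((le_div_iff₀' hμ).1 hβμ) hxK hoptK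
    _ = 4 * (1 - μ * α) * ‖x n - xopt‖ ^ 2 + 4 * μ * f xopt := by ring

/-- If `f ≥ 0` satisfies the Restricted Strict Convexity Property with
`0 < α ≤ β` on `A + A + A` (with `A` a union of subspaces), `μ > 0`, `β ≤ 1/μ`, and `x_opt`
minimises `f` over `A`, then the projected-gradient (IHT) iterates satisfy, for every `n`,
`‖x^{n+1} − x_opt‖² ≤ 4(1 − μα)‖x^n − x_opt‖² + 4μf(x_opt)`. -/
theorem iht_nonlinear_objective_per_iteration_bound
    {N : ℕ} {ι : Type*} [Nonempty ι]
    (Asub : ι → Submodule ℝ (EuclideanSpace ℝ (Fin N)))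
    (A : Set (EuclideanSpace ℝ (Fin N))) (hA : A = ⋃ i, (Asub i : Set (EuclideanSpace ℝ (Fin N))))
    (f : EuclideanSpace ℝ (Fin N) → ℝ) (hf : ∀ z, 0 ≤ f z)
    (gradf : EuclideanSpace ℝ (Fin N) → EuclideanSpace ℝ (Fin N))
    (hgrad : ∀ u, HasGradientAt f (gradf u) u)
    (α β μ : ℝ) (hα : 0 < α) (hαβ : α ≤ β) (hμ : 0 < μ) (hβμ : β ≤ 1 / μ)
    (hRSCP : ∀ x₁ x₂ : EuclideanSpace ℝ (Fin N), x₁ - x₂ ∈ A + A + A →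
      α * ‖x₁ - x₂‖ ^ 2 ≤ f x₁ - f x₂ - ⟪gradf x₂, x₁ - x₂⟫_ℝ ∧
        f x₁ - f x₂ - ⟪gradf x₂, x₁ - x₂⟫_ℝ ≤ β * ‖x₁ - x₂‖ ^ 2)
    (PA : EuclideanSpace ℝ (Fin N) → EuclideanSpace ℝ (Fin N))
    (hPA : ∀ z, PA z ∈ A ∧ ∀ a ∈ A, ‖z - PA z‖ ≤ ‖z - a‖)
    (xopt : EuclideanSpace ℝ (Fin N)) (hxoptA : xopt ∈ A) (hxopt : ∀ z ∈ A, f xopt ≤ f z)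
    (x : ℕ → EuclideanSpace ℝ (Fin N)) (hx0 : x 0 = 0)
    (hxit : ∀ n, x (n + 1) = PA (x n - (μ / 2) • gradf (x n))) :
    ∀ n : ℕ, ‖x (n + 1) - xopt‖ ^ 2 ≤
      4 * (1 - μ * α) * ‖x n - xopt‖ ^ 2 + 4 * μ * f xopt :=
  iht_nonlinear_objective_per_iteration_bound_general Asub A hA f hf gradf α β μ hμ hβμ hRSCP PA hPA
    xopt hxoptA x hx0 hxit
end

section
/- Suppose f(z) ≥ 0 for all z ∈ H, μ > 0, μ·β ≤ 1, and the upper restricted convexity bound f(x₁) − f(x₂) − ⟨∇f(x₂), x₁ − x₂⟩ ≤ β·‖x₁ − x₂‖² holds for all x₁, x₂ ∈ H with x₁ − x₂ ∈ Γ. Then for every x ∈ H, ‖(μ/2)·P_Γ(∇f(x))‖² ≤ μ·f(x). -/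
open scoped InnerProductSpace

section
variable {E : Type*} [NormedAddCommGroup E] [InnerProductSpace ℝ E]

theorem Submodule.real_inner_orthogonalProjectionOnto_self (K : Submodule ℝ E)
    [K.HasOrthogonalProjection] (v : E) :
    ⟪v, (K.orthogonalProjectionOnto v : E)⟫_ℝ = ‖(K.orthogonalProjectionOnto v : E)‖ ^ 2 := by
  rw [← K.inner_orthogonalProjectionOnto_eq_of_mem_right, Submodule.coe_inner,
    real_inner_self_eq_norm_sq]

theorem apply_sub_smul_le_of_upper_bound {f : E → ℝ} {g : E → E} {K : Submodule ℝ E} {β : ℝ}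
    (hub : ∀ x₁ x₂, x₁ - x₂ ∈ K → f x₁ - f x₂ - ⟪g x₂, x₁ - x₂⟫_ℝ ≤ β * ‖x₁ - x₂‖ ^ 2)
    (x : E) {d : E} (hd : d ∈ K) (t : ℝ) :
    f (x - t • d) ≤ f x - t * ⟪g x, d⟫_ℝ + β * t ^ 2 * ‖d‖ ^ 2 := by
  have h := hub (x - t • d) x (by simpa using K.smul_mem (-t) hd)
  rw [sub_sub_cancel_left, inner_neg_right, real_inner_smul_right, norm_neg, norm_smul,
    mul_pow, Real.norm_eq_abs, sq_abs] at h
  linarith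

end

theorem projected_gradient_norm_bound_general
    {N : ℕ}
    (f : EuclideanSpace ℝ (Fin N) → ℝ) (hf : ∀ z, 0 ≤ f z)
    (gradf : EuclideanSpace ℝ (Fin N) → EuclideanSpace ℝ (Fin N))
    (Γ : Submodule ℝ (EuclideanSpace ℝ (Fin N)))
    (β μ : ℝ) (hμ : 0 < μ) (hμβ : μ * β ≤ 1)
    (hub : ∀ x₁ x₂ : EuclideanSpace ℝ (Fin N), x₁ - x₂ ∈ Γ →
      f x₁ - f x₂ - ⟪gradf x₂, x₁ - x₂⟫_ℝ ≤ β * ‖x₁ - x₂‖ ^ 2) :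
    ∀ x : EuclideanSpace ℝ (Fin N),
      ‖(μ / 2) • (Submodule.orthogonalProjectionOnto Γ (gradf x) : EuclideanSpace ℝ (Fin N))‖ ^ 2 ≤
        μ * f x := by
  intro x
  set p : EuclideanSpace ℝ (Fin N) := ↑(Γ.orthogonalProjectionOnto (gradf x))
  -- since `μ β ≤ 1`, the step `x ↦ x - (μ / 2) • p` lowers `f` by at least `(μ / 4) ‖p‖²`,
  -- and `f ≥ 0` caps that decrease by `f x`
  have hstep := apply_sub_smul_le_of_upper_bound hub x (Γ.orthogonalProjectionOnto (gradf x)).2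
    (μ / 2)
  rw [Γ.real_inner_orthogonalProjectionOnto_self] at hstep
  rw [norm_smul, mul_pow, Real.norm_of_nonneg (by positivity)]
  nlinarith [hf (x - (μ / 2) • p), mul_le_mul_of_nonneg_right hμβ (mul_nonneg hμ.le (sq_nonneg ‖p‖))]

/-- If `f ≥ 0`, `μ > 0`, `μβ ≤ 1`, and the upper restricted convexity bound
`f(x₁) − f(x₂) − ⟨∇f(x₂), x₁ − x₂⟩ ≤ β‖x₁ − x₂‖²` holds whenever `x₁ − x₂ ∈ Γ`, then for
every `x`: `‖(μ/2)·P_Γ(∇f(x))‖² ≤ μf(x)`. -/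
theorem projected_gradient_norm_bound
    {N : ℕ}
    (f : EuclideanSpace ℝ (Fin N) → ℝ) (hf : ∀ z, 0 ≤ f z)
    (gradf : EuclideanSpace ℝ (Fin N) → EuclideanSpace ℝ (Fin N))
    (hgrad : ∀ u, HasGradientAt f (gradf u) u)
    (Γ : Submodule ℝ (EuclideanSpace ℝ (Fin N)))
    (β μ : ℝ) (hβ : 0 ≤ β) (hμ : 0 < μ) (hμβ : μ * β ≤ 1)
    (hub : ∀ x₁ x₂ : EuclideanSpace ℝ (Fin N), x₁ - x₂ ∈ Γ →
      f x₁ - f x₂ - ⟪gradf x₂, x₁ - x₂⟫_ℝ ≤ β * ‖x₁ - x₂‖ ^ 2) :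
    ∀ x : EuclideanSpace ℝ (Fin N),
      ‖(μ / 2) • (Submodule.orthogonalProjectionOnto Γ (gradf x) : EuclideanSpace ℝ (Fin N))‖ ^ 2 ≤
        μ * f x :=
  projected_gradient_norm_bound_general f hf gradf Γ β μ hμ hμβ hub
end

section
/- Let Φ : H → B be a map and S ⊆ H a convex set. Suppose that for every y ∈ B the function x ↦ ‖y − Φ(x)‖² is convex on S, i.e. for all x₁, x₂ ∈ S and all t ∈ [0,1], ‖y − Φ(t·x₁ + (1−t)·x₂)‖² ≤ t·‖y − Φ(x₁)‖² + (1−t)·‖y − Φ(x₂)‖². Then Φ is affine on S: for all x₁, x₂ ∈ S and all t ∈ [0,1], Φ(t·x₁ + (1−t)·x₂) = t·Φ(x₁) + (1−t)·Φ(x₂). -/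
/-! For fixed `a`, `b`, `m` and `t`, the convexity gap
`‖y - m‖² - (t‖y - a‖² + (1 - t)‖y - b‖²)` is an affine function of `y` whose linear part is
`2⟪y, t • a + (1 - t) • b - m⟫`. An affine function bounded above on the whole space has zero
linear part, so the convexity inequality for every `y` forces `m = t • a + (1 - t) • b`. -/

open scoped RealInnerProductSpace

section

variable {E : Type*} [NormedAddCommGroup E] [InnerProductSpace ℝ E]

theorem eq_zero_of_forall_inner_le {d : E} {C : ℝ} (h : ∀ y, ⟪y, d⟫ ≤ C) : d = 0 := by
  by_contra hd
  have hpos : 0 < ‖d‖ ^ 2 := by positivity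
  have := h (((C + 1) / ‖d‖ ^ 2) • d)
  rw [real_inner_smul_left, real_inner_self_eq_norm_sq, div_mul_cancel₀ _ hpos.ne'] at this
  linarith

theorem norm_sub_sq_sub_convex_combination (y a b m : E) (t : ℝ) :
    ‖y - m‖ ^ 2 - (t * ‖y - a‖ ^ 2 + (1 - t) * ‖y - b‖ ^ 2) =
      2 * ⟪y, t • a + (1 - t) • b - m⟫ + (‖m‖ ^ 2 - t * ‖a‖ ^ 2 - (1 - t) * ‖b‖ ^ 2) := by
  simp only [norm_sub_sq_real, inner_sub_right, inner_add_right, real_inner_smul_right]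
  ring

theorem eq_convex_combination_of_forall_norm_sub_sq_le {a b m : E} {t : ℝ}
    (h : ∀ y, ‖y - m‖ ^ 2 ≤ t * ‖y - a‖ ^ 2 + (1 - t) * ‖y - b‖ ^ 2) :
    m = t • a + (1 - t) • b := by
  refine (sub_eq_zero.mp (eq_zero_of_forall_inner_le
    (C := (t * ‖a‖ ^ 2 + (1 - t) * ‖b‖ ^ 2 - ‖m‖ ^ 2) / 2) fun y => ?_)).symm
  linarith [h y, norm_sub_sq_sub_convex_combination y a b m t]

end

theorem affine_of_convex_squared_residual_general
    {H B : Type*} [NormedAddCommGroup H] [InnerProductSpace ℝ H]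
    [NormedAddCommGroup B] [InnerProductSpace ℝ B]
    (Φ : H → B) (S : Set H)
    (hconv : ∀ y : B, ∀ x₁ ∈ S, ∀ x₂ ∈ S, ∀ t : ℝ, 0 ≤ t → t ≤ 1 →
      ‖y - Φ (t • x₁ + (1 - t) • x₂)‖ ^ 2 ≤
        t * ‖y - Φ x₁‖ ^ 2 + (1 - t) * ‖y - Φ x₂‖ ^ 2) :
    ∀ x₁ ∈ S, ∀ x₂ ∈ S, ∀ t : ℝ, 0 ≤ t → t ≤ 1 →
      Φ (t • x₁ + (1 - t) • x₂) = t • Φ x₁ + (1 - t) • Φ x₂ :=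
  fun x₁ hx₁ x₂ hx₂ t ht₀ ht₁ =>
    eq_convex_combination_of_forall_norm_sub_sq_le fun y => hconv y x₁ hx₁ x₂ hx₂ t ht₀ ht₁

/-- Let `Φ : H → B` be a map between real inner product spaces and `S ⊆ H`
convex. If for every `y ∈ B` the function `x ↦ ‖y − Φ(x)‖²` is convex on `S`, then `Φ` is
affine on `S`: `Φ(tx₁ + (1−t)x₂) = tΦ(x₁) + (1−t)Φ(x₂)` for `x₁, x₂ ∈ S`, `t ∈ [0,1]`. -/
theorem affine_of_convex_squared_residual
    {H B : Type*} [NormedAddCommGroup H] [InnerProductSpace ℝ H]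
    [NormedAddCommGroup B] [InnerProductSpace ℝ B]
    (Φ : H → B) (S : Set H) (hS : Convex ℝ S)
    (hconv : ∀ y : B, ∀ x₁ ∈ S, ∀ x₂ ∈ S, ∀ t : ℝ, 0 ≤ t → t ≤ 1 →
      ‖y - Φ (t • x₁ + (1 - t) • x₂)‖ ^ 2 ≤
        t * ‖y - Φ x₁‖ ^ 2 + (1 - t) * ‖y - Φ x₂‖ ^ 2) :
    ∀ x₁ ∈ S, ∀ x₂ ∈ S, ∀ t : ℝ, 0 ≤ t → t ≤ 1 →
      Φ (t • x₁ + (1 - t) • x₂) = t • Φ x₁ + (1 - t) • Φ x₂ :=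
  affine_of_convex_squared_residual_general Φ S hconv
end
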